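/- arXiv:2105.09925 — 7 statements merged into one kernel-verified Lean document; each statement's English description precedes it below -/
import Mathlib

section
/- Every matrix in USD₂ is of the form 𝒫(p,q,ξ) for some p,q,ξ ∈ [0,1] satisfying (1−p)(1−q) ≥ p·q·ξ. (Forward direction of Lemma 1.) -/
open Matrix
open scoped ComplexOrder

/-- A qubit state: a positive semidefinite 2×2 complex matrix with trace 1. -/
def QubitState (ρ : Matrix (Fin 2) (Fin 2) ℂ) : Prop :=
  ρ.PosSemidef ∧ ρ.trace = 1

/-- A qubit effect: a 2×2 complex matrix `E` with both `E` and `1 - E` positive semidefinite. -/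
def QubitEffect (E : Matrix (Fin 2) (Fin 2) ℂ) : Prop :=
  E.PosSemidef ∧ (1 - E).PosSemidef

/-- A realization of a 3×3 correlation matrix `P` by three qubit states, a three-outcome
qubit POVM `(M11, M21, M31)` and a two-outcome qubit POVM `(M12, M22)`. -/
def IsRealization (P : Matrix (Fin 3) (Fin 3) ℝ)
    (ρ : Fin 3 → Matrix (Fin 2) (Fin 2) ℂ)
    (M11 M21 M31 M12 M22 : Matrix (Fin 2) (Fin 2) ℂ) : Prop :=
  (∀ x, QubitState (ρ x)) ∧
  QubitEffect M11 ∧ QubitEffect M21 ∧ QubitEffect M31 ∧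
  M11 + M21 + M31 = 1 ∧
  QubitEffect M12 ∧ QubitEffect M22 ∧
  M12 + M22 = 1 ∧
  (∀ x, P x 0 = ((ρ x * M11).trace).re ∧
        P x 1 = ((ρ x * M21).trace).re ∧
        P x 2 = ((ρ x * M12).trace).re)

/-- The USD pattern of zeros and ones of the correlation matrix, Eq. (3). -/
def USDpattern (P : Matrix (Fin 3) (Fin 3) ℝ) : Prop :=
  P 0 2 = 0 ∧ P 1 1 = 0 ∧ P 1 2 = 1 ∧ P 2 0 = 0

/-- The set USD₂ of qubit USD correlations. -/
def USD2 (P : Matrix (Fin 3) (Fin 3) ℝ) : Prop :=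
  USDpattern P ∧
  ∃ ρ M11 M21 M31 M12 M22, IsRealization P ρ M11 M21 M31 M12 M22

/-- A three-outcome qubit POVM is simulable by dichotomic measurements, Eq. (1). -/
def Simulable (M11 M21 M31 : Matrix (Fin 2) (Fin 2) ℂ) : Prop :=
  ∃ p1 p2 p3 : ℝ, ∃ N11 N22 N13 : Matrix (Fin 2) (Fin 2) ℂ,
    0 ≤ p1 ∧ 0 ≤ p2 ∧ 0 ≤ p3 ∧ p1 + p2 + p3 = 1 ∧
    QubitEffect N11 ∧ QubitEffect N22 ∧ QubitEffect N13 ∧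
    M11 = p1 • N11 + p3 • N13 ∧
    M21 = p1 • (1 - N11) + p2 • N22 ∧
    M31 = p2 • (1 - N22) + p3 • (1 - N13)

/-- The set SIM₂ of simulable trichotomic qubit correlations in the minimal scenario. -/
def SIM2 (P : Matrix (Fin 3) (Fin 3) ℝ) : Prop :=
  ∃ ρ M11 M21 M31 M12 M22, IsRealization P ρ M11 M21 M31 M12 M22 ∧
    Simulable M11 M21 M31

/-- The parameterized USD correlation matrix 𝒫(p, q, ξ) of Eq. (4). -/
noncomputable def Pmat (p q ξ : ℝ) : Matrix (Fin 3) (Fin 3) ℝ :=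
  !![p * ξ,       q,           0;
     p * (1 - ξ), 0,           1;
     0,           q * (1 - ξ), ξ]

/-!
A state `ρ` and an effect `E` with `Re tr (ρ E) = 0` satisfy `ρ E = 0`. The USD pattern therefore
makes `ρ₁ ρ₂ = 0`, so that `ρ₁, ρ₂` are complementary pure states, `M₁|₂ = ρ₂` and `M₂|₁ = q ρ₁`,
while `ρ₃ M₁|₁ = 0` makes `M₁|₁` a multiple `p (1 - ρ₃)`. Reading off the entries with
`ξ = tr (ρ₃ ρ₂)` gives `𝒫(p, q, ξ)`, and `(1 - p)(1 - q) - p q ξ` is `det M₃|₁ ≥ 0`.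
The qubit-specific input is `adj A = 1 - A` for a 2×2 matrix of trace one, and the identity
`A X A = tr (X A) A - det A • adj X`.

The indices `x = 1, 2, 3` are `0, 1, 2 : Fin 3`, so `ρ₁` is `ρ 0`.
-/

namespace Matrix

lemma trace_conjTranspose_mul_self_mul_conjTranspose_mul_self {n α : Type*} [Fintype n]
    [CommRing α] [StarRing α] (C D : Matrix n n α) :
    (Cᴴ * C * (Dᴴ * D)).trace = (C * Dᴴ * (C * Dᴴ)ᴴ).trace := by
  rw [Matrix.mul_assoc, trace_mul_comm Cᴴ, conjTranspose_mul, conjTranspose_conjTranspose]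
  simp only [Matrix.mul_assoc]

lemma IsHermitian.mul_eq_zero_comm {n α : Type*} [Fintype n] [NonUnitalCommSemiring α]
    [StarRing α] {A B : Matrix n n α} (hA : A.IsHermitian) (hB : B.IsHermitian)
    (h : A * B = 0) : B * A = 0 := by
  simpa [conjTranspose_mul, hA.eq, hB.eq] using congr_arg (·ᴴ) h

namespace PosSemidef

open scoped MatrixOrder

variable {n 𝕜 : Type*} [Fintype n] [DecidableEq n] [RCLike 𝕜] {A B : Matrix n n 𝕜}

lemma trace_mul_nonneg (hA : A.PosSemidef) (hB : B.PosSemidef) : 0 ≤ (A * B).trace := by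
  obtain ⟨C, rfl⟩ := CStarAlgebra.nonneg_iff_eq_star_mul_self.mp hA.nonneg
  obtain ⟨D, rfl⟩ := CStarAlgebra.nonneg_iff_eq_star_mul_self.mp hB.nonneg
  simp only [star_eq_conjTranspose, trace_conjTranspose_mul_self_mul_conjTranspose_mul_self]
  exact (posSemidef_self_mul_conjTranspose _).trace_nonneg

lemma mul_eq_zero_of_trace_mul_eq_zero (hA : A.PosSemidef) (hB : B.PosSemidef)
    (h : (A * B).trace = 0) : A * B = 0 := by
  obtain ⟨C, rfl⟩ := CStarAlgebra.nonneg_iff_eq_star_mul_self.mp hA.nonneg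
  obtain ⟨D, rfl⟩ := CStarAlgebra.nonneg_iff_eq_star_mul_self.mp hB.nonneg
  simp only [star_eq_conjTranspose, trace_conjTranspose_mul_self_mul_conjTranspose_mul_self,
    trace_mul_conjTranspose_self_eq_zero_iff] at h ⊢
  rw [Matrix.mul_assoc, ← Matrix.mul_assoc C, h, Matrix.zero_mul, Matrix.mul_zero]

lemma adjugate (hA : A.PosSemidef) : A.adjugate.PosSemidef := by
  obtain ⟨C, rfl⟩ := CStarAlgebra.nonneg_iff_eq_star_mul_self.mp hA.nonneg
  rw [star_eq_conjTranspose, adjugate_mul_distrib, ← adjugate_conjTranspose]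
  exact posSemidef_self_mul_conjTranspose _

lemma trace_mul_eq_ofReal_re {A B : Matrix n n ℂ} (hA : A.PosSemidef) (hB : B.PosSemidef) :
    (A * B).trace = ((A * B).trace.re : ℂ) :=
  Complex.eq_re_of_ofReal_le (r := 0) (by rw [Complex.ofReal_zero]; exact hA.trace_mul_nonneg hB)

end PosSemidef

section FinTwo

variable {R : Type*} [CommRing R] {A E : Matrix (Fin 2) (Fin 2) R}

lemma adjugate_fin_two_eq_trace_smul_one_sub (A : Matrix (Fin 2) (Fin 2) R) :
    A.adjugate = A.trace • 1 - A := by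
  ext i j
  fin_cases i <;> fin_cases j <;> simp [adjugate_fin_two, trace_fin_two]

lemma mul_one_sub_self_of_trace_eq_one (hA : A.trace = 1) : A * (1 - A) = A.det • 1 := by
  rw [← mul_adjugate, adjugate_fin_two_eq_trace_smul_one_sub, hA, one_smul]

lemma det_one_sub_of_trace_eq_one (hA : A.trace = 1) : (1 - A).det = A.det := by
  simpa [adjugate_fin_two_eq_trace_smul_one_sub, hA] using det_adjugate A

lemma mul_det_eq_zero_of_mul_smul_one_sub_eq_zero {c : R} (hA : A.trace = 1)
    (h : A * (c • (1 - A)) = 0) : c * A.det = 0 := by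
  rw [Matrix.mul_smul, mul_one_sub_self_of_trace_eq_one hA, smul_smul] at h
  simpa using congr_fun₂ h 0 0

lemma mul_mul_self_fin_two (A X : Matrix (Fin 2) (Fin 2) R) :
    A * X * A = (X * A).trace • A - A.det • X.adjugate := by
  ext i j
  fin_cases i <;> fin_cases j <;>
    simp [adjugate_fin_two, trace_fin_two, det_fin_two, mul_apply, Fin.sum_univ_two] <;> ring

lemma eq_trace_mul_smul_one_sub_of_mul_eq_zero (hA : A.trace = 1) (h₁ : A * E = 0)
    (h₂ : E * A = 0) : E = (E * (1 - A)).trace • (1 - A) := by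
  have hdet : A.det • E = 0 := by
    rw [← smul_one_mul, ← adjugate_mul, Matrix.mul_assoc, h₁, Matrix.mul_zero]
  have hdet_adjugate : A.det • E.adjugate = 0 := by
    rw [adjugate_fin_two_eq_trace_smul_one_sub, smul_sub, smul_smul, ← smul_eq_mul, ← trace_smul,
      hdet, trace_zero, zero_smul, sub_zero]
  calc E = (1 - A) * E * (1 - A) := by simp [Matrix.sub_mul, Matrix.mul_sub, h₁, h₂]
    _ = (E * (1 - A)).trace • (1 - A) := by
        rw [mul_mul_self_fin_two, det_one_sub_of_trace_eq_one hA, hdet_adjugate, sub_zero]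

lemma det_one_sub_smul_sub_smul {a b : R} {A B : Matrix (Fin 2) (Fin 2) R}
    (hA : A.trace = 1) (hB : B.trace = 1) (ha : a * A.det = 0) (hB' : B.det = 0) :
    (1 - a • A - b • B).det = (1 - a) * (1 - b) - a * b * (A * B).trace := by
  rw [trace_fin_two] at hA hB
  rw [det_fin_two] at ha hB'
  simp only [det_fin_two, trace_fin_two, sub_apply, smul_apply, smul_eq_mul, one_apply_eq,
    one_apply_ne zero_ne_one, one_apply_ne one_ne_zero, mul_apply, Fin.sum_univ_two]
  linear_combination
    (-a + a * b * (B 0 0 + B 1 1)) * hA + (-b + a * b) * hB + a * ha + b ^ 2 * hB'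

end FinTwo

end Matrix

open Matrix

namespace QubitState

variable {ρ σ E : Matrix (Fin 2) (Fin 2) ℂ}

lemma isHermitian (hρ : QubitState ρ) : ρ.IsHermitian := hρ.1.isHermitian

lemma one_sub (hρ : QubitState ρ) : QubitState (1 - ρ) := by
  refine ⟨?_, by rw [trace_sub, trace_one, hρ.2]; norm_num⟩
  simpa [adjugate_fin_two_eq_trace_smul_one_sub, hρ.2] using hρ.1.adjugate

lemma re_trace_mul_mem_Icc (hρ : QubitState ρ) (hE : QubitEffect E) :
    (ρ * E).trace.re ∈ Set.Icc 0 1 := by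
  have h₀ := Complex.nonneg_iff.mp (hρ.1.trace_mul_nonneg hE.1)
  have h₁ := Complex.nonneg_iff.mp (hρ.1.trace_mul_nonneg hE.2)
  rw [Matrix.mul_sub, Matrix.mul_one, trace_sub, hρ.2, Complex.sub_re, Complex.one_re] at h₁
  exact ⟨h₀.1, sub_nonneg.mp h₁.1⟩

lemma eq_trace_mul_smul_one_sub (hρ : QubitState ρ) (hE : E.IsHermitian) (h : ρ * E = 0) :
    E = (E * (1 - ρ)).trace • (1 - ρ) :=
  eq_trace_mul_smul_one_sub_of_mul_eq_zero hρ.2 h (hρ.isHermitian.mul_eq_zero_comm hE h)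

lemma eq_one_sub_of_mul_eq_zero (hρ : QubitState ρ) (hσ : QubitState σ) (h : ρ * σ = 0) :
    σ = 1 - ρ := by
  have hσρ : σ * ρ = 0 := hρ.isHermitian.mul_eq_zero_comm hσ.isHermitian h
  have htr : (σ * (1 - ρ)).trace = 1 := by
    rw [Matrix.mul_sub, Matrix.mul_one, hσρ, sub_zero, hσ.2]
  simpa [htr] using hρ.eq_trace_mul_smul_one_sub hσ.isHermitian h

end QubitState

namespace IsRealization

variable {P : Matrix (Fin 3) (Fin 3) ℝ} {ρ : Fin 3 → Matrix (Fin 2) (Fin 2) ℂ}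
  {M11 M21 M31 M12 M22 : Matrix (Fin 2) (Fin 2) ℂ}

lemma trace_mul_eq (hR : IsRealization P ρ M11 M21 M31 M12 M22) (x : Fin 3) :
    (ρ x * M11).trace = P x 0 ∧ (ρ x * M21).trace = P x 1 ∧ (ρ x * M12).trace = P x 2 := by
  obtain ⟨hρ, hE11, hE21, -, -, hE12, -, -, hP⟩ := hR
  obtain ⟨h0, h1, h2⟩ := hP x
  exact ⟨h0 ▸ (hρ x).1.trace_mul_eq_ofReal_re hE11.1,
    h1 ▸ (hρ x).1.trace_mul_eq_ofReal_re hE21.1, h2 ▸ (hρ x).1.trace_mul_eq_ofReal_re hE12.1⟩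

lemma mul_eq_zero_of_usdPattern (hR : IsRealization P ρ M11 M21 M31 M12 M22)
    (hU : USDpattern P) :
    ρ 0 * M12 = 0 ∧ ρ 1 * M21 = 0 ∧ ρ 2 * M11 = 0 ∧ ρ 1 * (1 - M12) = 0 := by
  obtain ⟨h02, h11, h12, h20⟩ := hU
  have htr := hR.trace_mul_eq
  obtain ⟨hρ, hE11, hE21, -, -, hE12, -, -, -⟩ := hR
  refine ⟨(hρ 0).1.mul_eq_zero_of_trace_mul_eq_zero hE12.1 (by simp [(htr 0).2.2, h02]),
    (hρ 1).1.mul_eq_zero_of_trace_mul_eq_zero hE21.1 (by simp [(htr 1).2.1, h11]),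
    (hρ 2).1.mul_eq_zero_of_trace_mul_eq_zero hE11.1 (by simp [(htr 2).1, h20]),
    (hρ 1).1.mul_eq_zero_of_trace_mul_eq_zero hE12.2 ?_⟩
  rw [Matrix.mul_sub, Matrix.mul_one, trace_sub, (hρ 1).2, (htr 1).2.2, h12]
  simp

lemma M12_mul_state_one (hR : IsRealization P ρ M11 M21 M31 M12 M22) (hU : USDpattern P) :
    M12 * ρ 1 = ρ 1 := by
  obtain ⟨-, -, -, h⟩ := hR.mul_eq_zero_of_usdPattern hU
  obtain ⟨hρ, -, -, -, -, hE12, -⟩ := hR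
  have := (hρ 1).isHermitian.mul_eq_zero_comm hE12.2.isHermitian h
  rwa [Matrix.sub_mul, Matrix.one_mul, sub_eq_zero, eq_comm] at this

lemma state_one_eq_one_sub (hR : IsRealization P ρ M11 M21 M31 M12 M22) (hU : USDpattern P) :
    ρ 1 = 1 - ρ 0 := by
  obtain ⟨h, -⟩ := hR.mul_eq_zero_of_usdPattern hU
  refine (hR.1 0).eq_one_sub_of_mul_eq_zero (hR.1 1) ?_
  rw [← hR.M12_mul_state_one hU, ← Matrix.mul_assoc, h, Matrix.zero_mul]

lemma M12_eq (hR : IsRealization P ρ M11 M21 M31 M12 M22) (hU : USDpattern P) :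
    M12 = ρ 1 := by
  obtain ⟨h, -⟩ := hR.mul_eq_zero_of_usdPattern hU
  have hρ1 := hR.state_one_eq_one_sub hU
  have hM12ρ := hR.M12_mul_state_one hU
  obtain ⟨hρ, -, -, -, -, hE12, -⟩ := hR
  rw [(hρ 0).eq_trace_mul_smul_one_sub hE12.1.isHermitian h, ← hρ1, hM12ρ, (hρ 1).2, one_smul]

lemma det_state_zero_eq_zero (hR : IsRealization P ρ M11 M21 M31 M12 M22)
    (hU : USDpattern P) : (ρ 0).det = 0 := by
  obtain ⟨h, -⟩ := hR.mul_eq_zero_of_usdPattern hU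
  simpa using mul_det_eq_zero_of_mul_smul_one_sub_eq_zero (c := 1) (hR.1 0).2
    (by rwa [one_smul, ← hR.state_one_eq_one_sub hU, ← hR.M12_eq hU])

lemma trace_state_two_mul (hR : IsRealization P ρ M11 M21 M31 M12 M22) (hU : USDpattern P) :
    (ρ 2 * ρ 1).trace = P 2 2 ∧ (ρ 2 * ρ 0).trace = 1 - P 2 2 := by
  have hξ : (ρ 2 * ρ 1).trace = P 2 2 := hR.M12_eq hU ▸ (hR.trace_mul_eq 2).2.2
  refine ⟨hξ, ?_⟩
  rw [← hξ, hR.state_one_eq_one_sub hU, Matrix.mul_sub, Matrix.mul_one, trace_sub, (hR.1 2).2,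
    sub_sub_cancel]

lemma M21_eq (hR : IsRealization P ρ M11 M21 M31 M12 M22) (hU : USDpattern P) :
    M21 = (P 0 1 : ℂ) • ρ 0 := by
  obtain ⟨-, h, -, -⟩ := hR.mul_eq_zero_of_usdPattern hU
  have hρ1 := hR.state_one_eq_one_sub hU
  have htr := hR.trace_mul_eq 0
  obtain ⟨hρ, -, hE21, -⟩ := hR
  rw [(hρ 1).eq_trace_mul_smul_one_sub hE21.1.isHermitian h, hρ1, sub_sub_cancel,
    trace_mul_comm, htr.2.1]

lemma M11_eq (hR : IsRealization P ρ M11 M21 M31 M12 M22) (hU : USDpattern P) :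
    ∃ p ∈ Set.Icc (0 : ℝ) 1, M11 = (p : ℂ) • (1 - ρ 2) ∧ p * (ρ 2).det = 0 := by
  obtain ⟨-, -, h, -⟩ := hR.mul_eq_zero_of_usdPattern hU
  obtain ⟨hρ, hE11, -⟩ := hR
  have hτ := (hρ 2).one_sub
  have hM11 := (hρ 2).eq_trace_mul_smul_one_sub hE11.1.isHermitian h
  rw [trace_mul_comm, hτ.1.trace_mul_eq_ofReal_re hE11.1] at hM11
  refine ⟨_, hτ.re_trace_mul_mem_Icc hE11, hM11, ?_⟩
  exact_mod_cast mul_det_eq_zero_of_mul_smul_one_sub_eq_zero (hρ 2).2 (hM11 ▸ h)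

lemma det_M31_eq (hR : IsRealization P ρ M11 M21 M31 M12 M22) (hU : USDpattern P) {p : ℝ}
    (hM11 : M11 = (p : ℂ) • (1 - ρ 2)) (hp : p * (ρ 2).det = 0) :
    M31.det = ((1 - p) * (1 - P 0 1) - p * P 0 1 * P 2 2 : ℝ) := by
  have hτρ : ((1 - ρ 2) * ρ 0).trace = P 2 2 := by
    rw [Matrix.sub_mul, Matrix.one_mul, trace_sub, (hR.1 0).2, (hR.trace_state_two_mul hU).2,
      sub_sub_cancel]
  have hM31 : M31 = 1 - M11 - M21 := by
    obtain ⟨-, -, -, -, hsum, -⟩ := hR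
    rw [← hsum]
    abel
  rw [hM31, hM11, hR.M21_eq hU, det_one_sub_smul_sub_smul (hR.1 2).one_sub.2 (hR.1 0).2
    (by rwa [det_one_sub_of_trace_eq_one (hR.1 2).2]) (hR.det_state_zero_eq_zero hU), hτρ]
  push_cast
  ring

lemma eq_Pmat (hR : IsRealization P ρ M11 M21 M31 M12 M22) (hU : USDpattern P) {p : ℝ}
    (hM11 : M11 = (p : ℂ) • (1 - ρ 2)) : P = Pmat p (P 0 1) (P 2 2) := by
  obtain ⟨hξ, hξ'⟩ := hR.trace_state_two_mul hU
  have htr := hR.trace_mul_eq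
  have hP00 : (P 0 0 : ℂ) = p * P 2 2 := by
    rw [← (htr 0).1, hM11, Matrix.mul_smul, trace_smul, Matrix.mul_sub, Matrix.mul_one,
      trace_sub, (hR.1 0).2, trace_mul_comm, hξ', smul_eq_mul]
    ring
  have hP10 : (P 1 0 : ℂ) = p * (1 - P 2 2) := by
    rw [← (htr 1).1, hM11, Matrix.mul_smul, trace_smul, Matrix.mul_sub, Matrix.mul_one,
      trace_sub, (hR.1 1).2, trace_mul_comm, hξ, smul_eq_mul]
  have hP21 : (P 2 1 : ℂ) = P 0 1 * (1 - P 2 2) := by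
    rw [← (htr 2).2.1, hR.M21_eq hU, Matrix.mul_smul, trace_smul, hξ', smul_eq_mul]
  norm_cast at hP00 hP10 hP21
  obtain ⟨h02, h11, h12, h20⟩ := hU
  ext i j
  fin_cases i <;> fin_cases j <;> simp [Pmat, h02, h11, h12, h20, hP00, hP10, hP21]

end IsRealization

/-- Forward direction of Lemma 1: every matrix in USD₂ is of the form 𝒫(p,q,ξ) with
`p, q, ξ ∈ [0,1]` satisfying `(1-p)(1-q) ≥ p q ξ`. -/
theorem usd2_mem_imp_Pmat_form (P : Matrix (Fin 3) (Fin 3) ℝ) (hP : USD2 P) :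
    ∃ p q ξ : ℝ, p ∈ Set.Icc (0 : ℝ) 1 ∧ q ∈ Set.Icc (0 : ℝ) 1 ∧ ξ ∈ Set.Icc (0 : ℝ) 1 ∧
      (1 - p) * (1 - q) ≥ p * q * ξ ∧ P = Pmat p q ξ := by
  obtain ⟨hU, ρ, M11, M21, M31, M12, M22, hR⟩ := hP
  obtain ⟨p, hp, hM11, hpdet⟩ := hR.M11_eq hU
  have hdet := hR.det_M31_eq hU hM11 hpdet
  have hPmat := hR.eq_Pmat hU hM11
  obtain ⟨hρ, -, hE21, hE31, -, hE12, -, -, hPρ⟩ := hR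
  have hq : P 0 1 ∈ Set.Icc (0 : ℝ) 1 := (hPρ 0).2.1 ▸ (hρ 0).re_trace_mul_mem_Icc hE21
  have hξ : P 2 2 ∈ Set.Icc (0 : ℝ) 1 := (hPρ 2).2.2 ▸ (hρ 2).re_trace_mul_mem_Icc hE12
  have hineq := hE31.1.det_nonneg
  rw [hdet, Complex.zero_le_real] at hineq
  exact ⟨p, P 0 1, P 2 2, hp, hq, hξ, by linarith, hPmat⟩
end

section
/- For all p,q,ξ ∈ [0,1] with (1−p)(1−q) ≥ p·q·ξ, the matrix 𝒫(p,q,ξ) belongs to USD₂. (Converse direction of Lemma 1.) -/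
/-!
All operators can be taken real symmetric, `realSymm a b c = !![a, b; b, c]`, which is positive
semidefinite as soon as `a, c ≥ 0` and `b² ≤ a c`. Take `ρ₁ = |0⟩⟨0|`, `ρ₂ = |1⟩⟨1|`, the pure
state `ρ₃` with diagonal `(1 - ξ, ξ)`, and the computational-basis measurement `(|1⟩⟨1|, |0⟩⟨0|)`
as the second measurement. In the first one, `M₁|₁` is `p` times the projector orthogonal to `ρ₃`
(whence `𝒫₃,₁ = 0`), `M₂|₁ = q |0⟩⟨0|` and `M₃|₁ = 1 - M₁|₁ - M₂|₁`. The determinant of `M₃|₁` is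
`(1 - p)(1 - q) - p q ξ`, so the hypothesis is exactly what makes `M₃|₁` an effect.
-/

open Matrix
open scoped ComplexOrder

def realSymm (a b c : ℝ) : Matrix (Fin 2) (Fin 2) ℂ := !![(a : ℂ), b; b, c]

lemma quadratic_nonneg_of_sq_le_mul {a b c : ℝ} (ha : 0 ≤ a) (hc : 0 ≤ c) (hb : b ^ 2 ≤ a * c)
    (u v : ℝ) : 0 ≤ a * u ^ 2 + 2 * b * u * v + c * v ^ 2 := by
  -- `a Q = (a u + b v)² + (a c - b²) v²` and `c Q = (b u + c v)² + (a c - b²) u²`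
  have hQ : 0 ≤ (a + c) * (a * u ^ 2 + 2 * b * u * v + c * v ^ 2) := by
    nlinarith [sq_nonneg (a * u + b * v), sq_nonneg (b * u + c * v), sq_nonneg u, sq_nonneg v]
  rcases (add_nonneg ha hc).eq_or_lt with h | h
  · have ha0 : a = 0 := by linarith
    have hc0 : c = 0 := by linarith
    have hb0 : b = 0 := by subst ha0 hc0; nlinarith
    simp [ha0, hb0, hc0]
  · exact nonneg_of_mul_nonneg_right (by linarith) h

lemma star_dotProduct_realSymm_mulVec (a b c : ℝ) (x : Fin 2 → ℂ) :
    star x ⬝ᵥ (realSymm a b c *ᵥ x) =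
      ((a * (x 0).re ^ 2 + 2 * b * (x 0).re * (x 1).re + c * (x 1).re ^ 2) +
        (a * (x 0).im ^ 2 + 2 * b * (x 0).im * (x 1).im + c * (x 1).im ^ 2) : ℝ) := by
  apply Complex.ext <;>
  simp [realSymm, dotProduct, mulVec, Fin.sum_univ_two, sq] <;> ring

lemma posSemidef_realSymm {a b c : ℝ} (ha : 0 ≤ a) (hc : 0 ≤ c) (hb : b ^ 2 ≤ a * c) :
    (realSymm a b c).PosSemidef := by
  refine .of_dotProduct_mulVec_nonneg ?_ fun x => ?_
  · ext i j; fin_cases i <;> fin_cases j <;> simp [realSymm]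
  · rw [star_dotProduct_realSymm_mulVec, Complex.zero_le_real]
    exact add_nonneg (quadratic_nonneg_of_sq_le_mul ha hc hb _ _)
      (quadratic_nonneg_of_sq_le_mul ha hc hb _ _)

lemma realSymm_add (a b c a' b' c' : ℝ) :
    realSymm a b c + realSymm a' b' c' = realSymm (a + a') (b + b') (c + c') := by
  ext i j; fin_cases i <;> fin_cases j <;> simp [realSymm]

lemma one_eq_realSymm : (1 : Matrix (Fin 2) (Fin 2) ℂ) = realSymm 1 0 1 := by
  ext i j; fin_cases i <;> fin_cases j <;> simp [realSymm]

lemma one_sub_realSymm (a b c : ℝ) : 1 - realSymm a b c = realSymm (1 - a) (-b) (1 - c) := by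
  rw [sub_eq_iff_eq_add, realSymm_add, one_eq_realSymm]; ring_nf

lemma trace_realSymm (a b c : ℝ) : (realSymm a b c).trace = a + c := by
  simp [realSymm, trace, Fin.sum_univ_two]

lemma re_trace_realSymm_mul (a b c d e f : ℝ) :
    ((realSymm a b c * realSymm d e f).trace).re = a * d + 2 * b * e + c * f := by
  simp [realSymm, trace, Fin.sum_univ_two]; ring

lemma qubitState_realSymm {a b c : ℝ} (ha : 0 ≤ a) (hc : 0 ≤ c) (hb : b ^ 2 ≤ a * c)
    (htr : a + c = 1) : QubitState (realSymm a b c) :=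
  ⟨posSemidef_realSymm ha hc hb, by rw [trace_realSymm]; exact_mod_cast htr⟩

lemma qubitEffect_realSymm {a b c : ℝ} (ha : 0 ≤ a) (hc : 0 ≤ c) (hb : b ^ 2 ≤ a * c)
    (ha' : a ≤ 1) (hc' : c ≤ 1) (hb' : b ^ 2 ≤ (1 - a) * (1 - c)) :
    QubitEffect (realSymm a b c) := by
  refine ⟨posSemidef_realSymm ha hc hb, ?_⟩
  rw [one_sub_realSymm]
  exact posSemidef_realSymm (by linarith) (by linarith) (by rwa [neg_sq])

theorem isRealization_Pmat {p q ξ s : ℝ} (hp : 0 ≤ p) (hp' : p ≤ 1) (hq : 0 ≤ q) (hq' : q ≤ 1)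
    (hξ : 0 ≤ ξ) (hξ' : ξ ≤ 1) (hs : s ^ 2 = ξ * (1 - ξ))
    (hcon : p * q * ξ ≤ (1 - p) * (1 - q)) :
    IsRealization (Pmat p q ξ) ![realSymm 1 0 0, realSymm 0 0 1, realSymm (1 - ξ) s ξ]
      (realSymm (p * ξ) (-(p * s)) (p * (1 - ξ))) (realSymm q 0 0)
      (realSymm (1 - p * ξ - q) (p * s) (1 - p * (1 - ξ))) (realSymm 0 0 1) (realSymm 1 0 0) := by
  have hps : (p * s) ^ 2 = p * ξ * (p * (1 - ξ)) := by rw [mul_pow, hs]; ring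
  have hpξ : 0 ≤ p * ξ := mul_nonneg hp hξ
  have hpξ' : 0 ≤ p * (1 - ξ) := mul_nonneg hp (by linarith)
  have hdet₃ : (1 - p * ξ - q) * (1 - p * (1 - ξ)) - (p * s) ^ 2 =
      (1 - p) * (1 - q) - p * q * ξ := by rw [hps]; ring
  have hdet₃' : (1 - (1 - p * ξ - q)) * (1 - (1 - p * (1 - ξ))) - (p * s) ^ 2 =
      q * (p * (1 - ξ)) := by rw [hps]; ring
  refine ⟨fun x => ?_, ?_, ?_, ?_, ?_, ?_, ?_, ?_, fun x => ?_⟩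
  · fin_cases x
    · exact qubitState_realSymm zero_le_one le_rfl (by norm_num) (by norm_num)
    · exact qubitState_realSymm le_rfl zero_le_one (by norm_num) (by norm_num)
    · exact qubitState_realSymm (by linarith) hξ (by linarith) (by ring)
  · exact qubitEffect_realSymm hpξ hpξ' (by rw [neg_sq, hps]) (by nlinarith) (by nlinarith)
      (by rw [neg_sq, hps]; nlinarith)
  · exact qubitEffect_realSymm hq le_rfl (by norm_num) hq' zero_le_one (by linarith)
  · exact qubitEffect_realSymm (by nlinarith) (by linarith) (by linarith) (by linarith)
      (by linarith) (by nlinarith [mul_nonneg hq hpξ'])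
  · rw [realSymm_add, realSymm_add, one_eq_realSymm]; ring_nf
  · exact qubitEffect_realSymm le_rfl zero_le_one (by norm_num) zero_le_one le_rfl (by norm_num)
  · exact qubitEffect_realSymm zero_le_one le_rfl (by norm_num) le_rfl zero_le_one (by norm_num)
  · rw [realSymm_add, one_eq_realSymm]; ring_nf
  · fin_cases x <;> simp [Pmat, re_trace_realSymm_mul]
    exact ⟨by linear_combination 2 * p * hs, by ring⟩

/-- Converse direction of Lemma 1: for all `p, q, ξ ∈ [0,1]` with `(1-p)(1-q) ≥ p q ξ`,
the matrix 𝒫(p,q,ξ) belongs to USD₂. -/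
theorem Pmat_mem_usd2 (p q ξ : ℝ) (hp : p ∈ Set.Icc (0 : ℝ) 1) (hq : q ∈ Set.Icc (0 : ℝ) 1)
    (hξ : ξ ∈ Set.Icc (0 : ℝ) 1) (hcon : (1 - p) * (1 - q) ≥ p * q * ξ) :
    USD2 (Pmat p q ξ) := by
  obtain ⟨hp₀, hp₁⟩ := hp
  obtain ⟨hq₀, hq₁⟩ := hq
  obtain ⟨hξ₀, hξ₁⟩ := hξ
  have hs : √(ξ * (1 - ξ)) ^ 2 = ξ * (1 - ξ) := Real.sq_sqrt (by nlinarith)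
  exact ⟨by simp [USDpattern, Pmat], _, _, _, _, _, _,
    isRealization_Pmat hp₀ hp₁ hq₀ hq₁ hξ₀ hξ₁ hs hcon⟩
end

section
/- Uniqueness part of Lemma 1: let 𝒫 ∈ USD₂ satisfy 𝒫₁,₁ + 𝒫₂,₁ > 0, and let (ρ₁,ρ₂,ρ₃; M₁|₁,M₂|₁,M₃|₁; M₁|₂,M₂|₂) and (ρ₁′,ρ₂′,ρ₃′; M₁|₁′,M₂|₁′,M₃|₁′; M₁|₂′,M₂|₂′) be two qubit realizations of 𝒫 (states, a three-outcome POVM and a two-outcome POVM reproducing 𝒫 as in the definition of USD₂). Then there exists a 2×2 unitary matrix U such that ρₓ′ = U ρₓ U† for x = 1,2,3 and M_{a|y}′ = U M_{a|y} U† for all effects of both POVMs. -/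
open Matrix
open scoped ComplexOrder

section Toolkit
variable {A B : Matrix (Fin 2) (Fin 2) ℂ}

lemma psd_diag (hA : A.PosSemidef) (i : Fin 2) : 0 ≤ A i i := by
  have := hA.dotProduct_mulVec_nonneg (Pi.single i 1)
  simpa [dotProduct, mulVec, Pi.single_apply, Finset.sum_ite_eq] using this

lemma psd_trace_nonneg (hA : A.PosSemidef) : 0 ≤ A.trace := by
  have h0 := psd_diag hA 0
  have h1 := psd_diag hA 1
  rw [Matrix.trace_fin_two]
  exact add_nonneg h0 h1

lemma psd_trace_eq_zero (hA : A.PosSemidef) (h : A.trace = 0) : A = 0 := by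
  obtain ⟨B, hB⟩ := (by open scoped MatrixOrder in
    exact CStarAlgebra.nonneg_iff_eq_star_mul_self.mp hA.nonneg :
    ∃ B : Matrix (Fin 2) (Fin 2) ℂ, A = star B * B)
  rw [Matrix.star_eq_conjTranspose] at hB
  subst hB
  suffices hB : B = 0 by rw [hB]; simp
  rw [Matrix.trace_fin_two] at h
  simp only [Matrix.mul_apply, Fin.sum_univ_two, Matrix.conjTranspose_apply] at h
  have h' : Complex.normSq (B 0 0) + Complex.normSq (B 1 0) + (Complex.normSq (B 0 1) + Complex.normSq (B 1 1)) = 0 := by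
    have := congrArg Complex.re h
    simpa [Complex.normSq_apply, Complex.add_re, Complex.mul_re] using this
  ext i j
  have h00 : Complex.normSq (B 0 0) = 0 := by nlinarith [Complex.normSq_nonneg (B 0 0), Complex.normSq_nonneg (B 1 0), Complex.normSq_nonneg (B 0 1), Complex.normSq_nonneg (B 1 1)]
  have h10 : Complex.normSq (B 1 0) = 0 := by nlinarith [Complex.normSq_nonneg (B 0 0), Complex.normSq_nonneg (B 1 0), Complex.normSq_nonneg (B 0 1), Complex.normSq_nonneg (B 1 1)]
  have h01 : Complex.normSq (B 0 1) = 0 := by nlinarith [Complex.normSq_nonneg (B 0 0), Complex.normSq_nonneg (B 1 0), Complex.normSq_nonneg (B 0 1), Complex.normSq_nonneg (B 1 1)]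
  have h11 : Complex.normSq (B 1 1) = 0 := by nlinarith [Complex.normSq_nonneg (B 0 0), Complex.normSq_nonneg (B 1 0), Complex.normSq_nonneg (B 0 1), Complex.normSq_nonneg (B 1 1)]
  rw [Complex.normSq_eq_zero] at h00 h10 h01 h11
  fin_cases i <;> fin_cases j <;> simp [h00, h10, h01, h11]
end Toolkit

section Toolkit2
variable {A B : Matrix (Fin 2) (Fin 2) ℂ}

lemma psd_sqrt_exists (hA : A.PosSemidef) :
    ∃ S : Matrix (Fin 2) (Fin 2) ℂ, Sᴴ = S ∧ S * S = A :=
  by open scoped MatrixOrder in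
    exact ⟨CFC.sqrt A, (CFC.sqrt_nonneg A).posSemidef.1, CFC.sqrt_mul_sqrt_self A hA.nonneg⟩

lemma psd_mul_trace_nonneg (hA : A.PosSemidef) (hB : B.PosSemidef) : 0 ≤ (A * B).trace := by
  obtain ⟨S, hH, hS⟩ := psd_sqrt_exists hA
  have h1 : (A * B).trace = (S * B * S).trace := by
    rw [← hS, Matrix.mul_assoc, Matrix.trace_mul_comm S (S * B), Matrix.mul_assoc]
  have h2 : (S * B * S).PosSemidef := by
    have := hB.conjTranspose_mul_mul_same S
    rwa [hH] at this
  rw [h1]; exact psd_trace_nonneg h2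

lemma psd_mul_trace_re (hA : A.PosSemidef) (hB : B.PosSemidef) :
    (A * B).trace = (((A * B).trace.re : ℝ) : ℂ) ∧ 0 ≤ (A * B).trace.re := by
  have h := psd_mul_trace_nonneg hA hB
  rw [Complex.le_def] at h
  simp only [Complex.zero_re, Complex.zero_im] at h
  refine ⟨?_, h.1⟩
  exact (Complex.re_add_im _).symm.trans (by rw [← h.2]; simp)

lemma psd_mul_eq_zero (hA : A.PosSemidef) (hB : B.PosSemidef)
    (h : ((A * B).trace).re = 0) : A * B = 0 := by
  have htr : (A * B).trace = 0 := by
    have h2 := (psd_mul_trace_re hA hB).1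
    rw [h2, h]; simp
  obtain ⟨S, hH, hS⟩ := psd_sqrt_exists hA
  obtain ⟨T, hTH, hT⟩ := psd_sqrt_exists hB
  have h1 : (A * B).trace = (S * B * S).trace := by
    rw [← hS, Matrix.mul_assoc, Matrix.trace_mul_comm S (S * B), Matrix.mul_assoc]
  have h2 : (S * B * S).PosSemidef := by
    have := hB.conjTranspose_mul_mul_same S
    rwa [hH] at this
  have h3 : S * B * S = 0 := psd_trace_eq_zero h2 (by rw [← h1, htr])
  have h4 : (T * S)ᴴ * (T * S) = 0 := by
    rw [Matrix.conjTranspose_mul, hH, hTH]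
    calc S * T * (T * S) = S * (T * T) * S := by noncomm_ring
      _ = 0 := by rw [hT, h3]
  have h5 : T * S = 0 := Matrix.conjTranspose_mul_self_eq_zero.mp h4
  have h6 : B * A = 0 := by
    calc B * A = T * (T * S) * S := by rw [← hT, ← hS]; noncomm_ring
      _ = 0 := by rw [h5]; simp
  calc A * B = (B * A)ᴴ := by rw [Matrix.conjTranspose_mul, hA.1, hB.1]
    _ = 0 := by rw [h6]; simp

end Toolkit2

section Toolkit3
variable {X Y : Matrix (Fin 2) (Fin 2) ℂ}

lemma idem_of_trace_det (h1 : X.trace = 1) (h0 : X.det = 0) : X * X = X := by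
  rw [Matrix.trace_fin_two] at h1
  rw [Matrix.det_fin_two] at h0
  ext i j
  rw [Matrix.mul_apply, Fin.sum_univ_two]
  fin_cases i <;> fin_cases j <;> simp only [Fin.zero_eta, Fin.mk_one]
  · linear_combination X 0 0 * h1 - h0
  · linear_combination X 0 1 * h1
  · linear_combination X 1 0 * h1
  · linear_combination X 1 1 * h1 - h0

lemma zero_of_det_ne (hd : X.det ≠ 0) (h : X * Y = 0) : Y = 0 := by
  have hinv : X⁻¹ * X = 1 := Matrix.nonsing_inv_mul X (isUnit_iff_ne_zero.mpr hd)
  calc Y = X⁻¹ * X * Y := by rw [hinv, Matrix.one_mul]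
    _ = X⁻¹ * (X * Y) := by rw [Matrix.mul_assoc]
    _ = 0 := by rw [h, Matrix.mul_zero]

lemma states_mul_zero (hX : X.PosSemidef) (hXt : X.trace = 1)
    (hY : Y.PosSemidef) (hYt : Y.trace = 1) (h : X * Y = 0) :
    X + Y = 1 ∧ X * X = X ∧ Y * Y = Y := by
  have hYX : Y * X = 0 := by
    have : (X * Y)ᴴ = Y * X := by rw [Matrix.conjTranspose_mul, hX.1, hY.1]
    rw [← this, h, Matrix.conjTranspose_zero]
  have hdX : X.det = 0 := by
    by_contra hd
    have := zero_of_det_ne hd h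
    rw [this, Matrix.trace_zero] at hYt
    exact one_ne_zero hYt.symm
  have hdY : Y.det = 0 := by
    by_contra hd
    have := zero_of_det_ne hd hYX
    rw [this, Matrix.trace_zero] at hXt
    exact one_ne_zero hXt.symm
  have hXX : X * X = X := idem_of_trace_det hXt hdX
  have hYY : Y * Y = Y := idem_of_trace_det hYt hdY
  refine ⟨?_, hXX, hYY⟩
  have e : (1 - X - Y) * (1 - X - Y)
      = 1 - X - X + X * X + X * Y - Y + Y * X + Y * Y - Y := by noncomm_ring
  rw [hXX, h, hYX, hYY] at e
  have hTT : (1 - X - Y) * (1 - X - Y) = 1 - X - Y := by rw [e]; abel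
  have hTH : (1 - X - Y)ᴴ = 1 - X - Y := by
    rw [Matrix.conjTranspose_sub, Matrix.conjTranspose_sub, Matrix.conjTranspose_one, hX.1, hY.1]
  have hTpsd : (1 - X - Y).PosSemidef := by
    have : (1 - X - Y) = (1 - X - Y)ᴴ * (1 - X - Y) := by rw [hTH, hTT]
    rw [this]; exact Matrix.posSemidef_conjTranspose_mul_self _
  have hTtr : (1 - X - Y).trace = 0 := by
    rw [Matrix.trace_sub, Matrix.trace_sub, Matrix.trace_one, hXt, hYt]
    norm_num
  have hT0 : (1 : Matrix (Fin 2) (Fin 2) ℂ) - X - Y = 0 := psd_trace_eq_zero hTpsd hTtr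
  rw [sub_sub, sub_eq_zero] at hT0
  exact hT0.symm

end Toolkit3

section Toolkit4
variable {X : Matrix (Fin 2) (Fin 2) ℂ}

lemma pure_decomp (hX : X.PosSemidef) (h1 : X.trace = 1) (hid : X * X = X) :
    ∃ v : Fin 2 → ℂ, star v ⬝ᵥ v = 1 ∧ X = Matrix.vecMulVec v (star v) := by
  have hd := psd_diag hX 0
  rw [Complex.le_def] at hd
  simp only [Complex.zero_re, Complex.zero_im] at hd
  have ha : X 0 0 = ((X 0 0).re : ℂ) := by
    rw [Complex.ext_iff]; simp [hd.2.symm]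
  have hherm : X 1 0 = star (X 0 1) := by
    have := congrFun (congrFun hX.1 1) 0
    rw [Matrix.conjTranspose_apply] at this
    exact this.symm
  have htr : X 0 0 + X 1 1 = 1 := by rw [← Matrix.trace_fin_two]; exact h1
  have h00 : X 0 0 * X 0 0 + X 0 1 * X 1 0 = X 0 0 := by
    have := congrFun (congrFun hid 0) 0
    rw [Matrix.mul_apply, Fin.sum_univ_two] at this
    exact this
  set r : ℝ := (X 0 0).re with hr
  rcases eq_or_lt_of_le hd.1 with hz | hp
  · -- r = 0 case
    have ha0 : X 0 0 = 0 := by rw [ha, ← hz]; simp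
    have hb0 : X 0 1 = 0 := by
      have h2 : X 0 1 * X 1 0 = 0 := by
        linear_combination h00 + (1 - X 0 0) * ha0
      rw [hherm] at h2
      simpa [mul_comm, Complex.mul_conj, Complex.normSq_eq_zero] using h2
    have hc0 : X 1 0 = 0 := by rw [hherm, hb0]; simp
    have hd1 : X 1 1 = 1 := by linear_combination htr - ha0
    refine ⟨![0, 1], by simp [dotProduct, Fin.sum_univ_two], ?_⟩
    ext i j
    fin_cases i <;> fin_cases j <;>
      simp [Matrix.vecMulVec_apply, ha0, hb0, hc0, hd1]
  · -- r > 0 case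
    set α : ℝ := Real.sqrt r with hα
    have hα2 : (α : ℂ) * (α : ℂ) = ((r : ℝ) : ℂ) := by
      norm_cast
      exact Real.mul_self_sqrt (le_of_lt hp)
    have hαpos : (0:ℝ) < α := Real.sqrt_pos.mpr hp
    have hαne : (α : ℂ) ≠ 0 := by
      simp only [ne_eq, Complex.ofReal_eq_zero]
      exact ne_of_gt hαpos
    have hαstar : star ((α:ℝ) : ℂ) = ((α:ℝ) : ℂ) := by
      rw [Complex.star_def, Complex.conj_ofReal]
    have hb : X 0 1 * star (X 0 1) = ((r:ℝ):ℂ) - ((r:ℝ):ℂ) * ((r:ℝ):ℂ) := by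
      rw [hherm, ha] at h00
      linear_combination h00
    have hd1 : X 1 1 = 1 - ((r:ℝ):ℂ) := by rw [ha] at htr; linear_combination htr
    refine ⟨![(α : ℂ), star (X 0 1) / (α : ℂ)], ?_, ?_⟩
    · simp only [dotProduct, Fin.sum_univ_two, Pi.star_apply, Matrix.cons_val_zero,
        Matrix.cons_val_one, Matrix.head_cons, star_div₀, star_star, hαstar]
      rw [div_mul_div_comm, hα2]
      have hrne : ((r:ℝ):ℂ) ≠ 0 := Complex.ofReal_ne_zero.mpr (ne_of_gt hp)
      rw [hb]
      field_simp
      ring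
    · ext i j
      fin_cases i <;> fin_cases j
      · show X 0 0 = Matrix.vecMulVec _ _ 0 0
        rw [Matrix.vecMulVec_apply]
        show X 0 0 = (α:ℂ) * star ((α:ℂ))
        rw [hαstar, hα2, ha]
      · show X 0 1 = Matrix.vecMulVec _ _ 0 1
        rw [Matrix.vecMulVec_apply]
        show X 0 1 = (α:ℂ) * star (star (X 0 1) / (α:ℂ))
        rw [star_div₀, star_star, hαstar]
        field_simp
      · show X 1 0 = Matrix.vecMulVec _ _ 1 0
        rw [Matrix.vecMulVec_apply]
        show X 1 0 = (star (X 0 1) / (α:ℂ)) * star ((α:ℂ))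
        rw [hαstar, hherm]
        field_simp
      · show X 1 1 = Matrix.vecMulVec _ _ 1 1
        rw [Matrix.vecMulVec_apply]
        show X 1 1 = (star (X 0 1) / (α:ℂ)) * star (star (X 0 1) / (α:ℂ))
        rw [star_div₀, star_star, hαstar, hd1]
        rw [div_mul_div_comm, hα2]
        rw [eq_div_iff (by simpa using (Complex.ofReal_ne_zero.mpr (ne_of_gt hp)))]
        linear_combination -hb
end Toolkit4

section Toolkit5

lemma vmv_mul (a b c d : Fin 2 → ℂ) :
    Matrix.vecMulVec a b * Matrix.vecMulVec c d = (b ⬝ᵥ c) • Matrix.vecMulVec a d := by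
  ext i j
  simp only [Matrix.mul_apply, Matrix.vecMulVec_apply, Matrix.smul_apply, dotProduct,
    Fin.sum_univ_two, smul_eq_mul]
  ring

lemma vmv_trace (a d : Fin 2 → ℂ) : (Matrix.vecMulVec a d).trace = d ⬝ᵥ a := by
  simp only [Matrix.trace_fin_two, Matrix.vecMulVec_apply, dotProduct, Fin.sum_univ_two]
  ring

lemma vmv_conjT (a b : Fin 2 → ℂ) :
    (Matrix.vecMulVec a (star b))ᴴ = Matrix.vecMulVec b (star a) := by
  ext i j
  simp only [Matrix.conjTranspose_apply, Matrix.vecMulVec_apply, Pi.star_apply, star_mul',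
    star_star]
  ring

lemma vmv_sand (u : Fin 2 → ℂ) (A : Matrix (Fin 2) (Fin 2) ℂ) :
    Matrix.vecMulVec u (star u) * A * Matrix.vecMulVec u (star u)
      = ((Matrix.vecMulVec u (star u) * A).trace) • Matrix.vecMulVec u (star u) := by
  ext i j
  simp only [Matrix.mul_apply, Matrix.vecMulVec_apply, Matrix.smul_apply, Matrix.trace_fin_two,
    Fin.sum_univ_two, smul_eq_mul, Pi.star_apply]
  ring

end Toolkit5

lemma struct (P : Matrix (Fin 3) (Fin 3) ℝ)
    (hpat : USDpattern P) (hpos : P 0 0 + P 1 0 > 0)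
    (ρ : Fin 3 → Matrix (Fin 2) (Fin 2) ℂ)
    (M11 M21 M31 M12 M22 : Matrix (Fin 2) (Fin 2) ℂ)
    (h : IsRealization P ρ M11 M21 M31 M12 M22) :
    ∃ v s : Fin 2 → ℂ,
      star v ⬝ᵥ v = 1 ∧ star s ⬝ᵥ s = 1 ∧
      ρ 1 = Matrix.vecMulVec v (star v) ∧
      ρ 0 = 1 - ρ 1 ∧
      M12 = ρ 1 ∧ M22 = ρ 0 ∧
      M21 = ((P 0 1 : ℝ) : ℂ) • ρ 0 ∧
      M11 = (((P 0 0 + P 1 0 : ℝ)) : ℂ) • Matrix.vecMulVec s (star s) ∧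
      ρ 2 = 1 - Matrix.vecMulVec s (star s) ∧
      M31 = 1 - M11 - M21 ∧
      (star v ⬝ᵥ s) * (star s ⬝ᵥ v) * (((P 0 0 + P 1 0 : ℝ)) : ℂ) = ((P 1 0 : ℝ) : ℂ) := by
  obtain ⟨hstate, hE11, hE21, hE31, hsum3, hE12, hE22, hsum2, hP⟩ := h
  set c : ℝ := P 0 0 + P 1 0 with hc
  have hcpos : (0:ℝ) < c := hpos
  have hcne : ((c:ℝ):ℂ) ≠ 0 := Complex.ofReal_ne_zero.mpr (ne_of_gt hcpos)
  -- ρ0 * M12 = 0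
  have h0M12 : ρ 0 * M12 = 0 := by
    apply psd_mul_eq_zero (hstate 0).1 hE12.1
    rw [← (hP 0).2.2, hpat.1]
  -- ρ1 * M12 = ρ1
  have h1M12 : ρ 1 * M12 = ρ 1 := by
    have h0 : ρ 1 * (1 - M12) = 0 := by
      apply psd_mul_eq_zero (hstate 1).1 hE12.2
      rw [Matrix.mul_sub, Matrix.mul_one, Matrix.trace_sub, Complex.sub_re, (hstate 1).2,
        ← (hP 1).2.2, hpat.2.2.1]
      norm_num
    rw [Matrix.mul_sub, Matrix.mul_one, sub_eq_zero] at h0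
    exact h0.symm
  have hM12ρ1 : M12 * ρ 1 = ρ 1 := by
    have := congrArg Matrix.conjTranspose h1M12
    rwa [Matrix.conjTranspose_mul, hE12.1.1, (hstate 1).1.1] at this
  have hρ0ρ1 : ρ 0 * ρ 1 = 0 := by
    calc ρ 0 * ρ 1 = ρ 0 * (M12 * ρ 1) := by rw [hM12ρ1]
      _ = (ρ 0 * M12) * ρ 1 := by rw [Matrix.mul_assoc]
      _ = 0 := by rw [h0M12, Matrix.zero_mul]
  obtain ⟨hsum01, hρ0idem, hρ1idem⟩ :=
    states_mul_zero (hstate 0).1 (hstate 0).2 (hstate 1).1 (hstate 1).2 hρ0ρ1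
  obtain ⟨v, hv, hρ1v⟩ := pure_decomp (hstate 1).1 (hstate 1).2 hρ1idem
  obtain ⟨w0, hw0, hρ0w⟩ := pure_decomp (hstate 0).1 (hstate 0).2 hρ0idem
  have hρ0eq : ρ 0 = 1 - ρ 1 := by rw [← hsum01]; abel
  -- M12 = ρ 1
  have hM12 : M12 = ρ 1 := by
    calc M12 = (ρ 0 + ρ 1) * M12 := by rw [hsum01, Matrix.one_mul]
      _ = ρ 0 * M12 + ρ 1 * M12 := by rw [Matrix.add_mul]
      _ = ρ 1 := by rw [h0M12, h1M12, zero_add]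
  have hM22 : M22 = ρ 0 := by
    have : M22 = 1 - M12 := by rw [← hsum2]; abel
    rw [this, hM12, hρ0eq]
  -- M21
  have h1M21 : ρ 1 * M21 = 0 := by
    apply psd_mul_eq_zero (hstate 1).1 hE21.1
    rw [← (hP 1).2.1, hpat.2.1]
  have hM21ρ1 : M21 * ρ 1 = 0 := by
    have := congrArg Matrix.conjTranspose h1M21
    rwa [Matrix.conjTranspose_mul, hE21.1.1, (hstate 1).1.1, Matrix.conjTranspose_zero] at this
  have hM21sand : ρ 0 * M21 * ρ 0 = M21 := by
    have e : (1 - ρ 1) * M21 * (1 - ρ 1)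
        = M21 - ρ 1 * M21 - M21 * ρ 1 + ρ 1 * M21 * ρ 1 := by noncomm_ring
    rw [h1M21, hM21ρ1] at e
    rw [hρ0eq, e, Matrix.zero_mul]
    simp
  have hq : (ρ 0 * M21).trace = ((P 0 1 : ℝ) : ℂ) := by
    rw [(psd_mul_trace_re (hstate 0).1 hE21.1).1, ← (hP 0).2.1]
  have hM21 : M21 = ((P 0 1 : ℝ) : ℂ) • ρ 0 := by
    rw [← hq, ← hM21sand]
    conv_lhs => rw [hρ0w]
    rw [vmv_sand, ← hρ0w, hM21sand]
  -- trace of M11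
  have ht00 : (ρ 0 * M11).trace = ((P 0 0 : ℝ) : ℂ) := by
    rw [(psd_mul_trace_re (hstate 0).1 hE11.1).1, ← (hP 0).1]
  have ht10 : (ρ 1 * M11).trace = ((P 1 0 : ℝ) : ℂ) := by
    rw [(psd_mul_trace_re (hstate 1).1 hE11.1).1, ← (hP 1).1]
  have htrM11 : M11.trace = ((c:ℝ) : ℂ) := by
    calc M11.trace = ((ρ 0 + ρ 1) * M11).trace := by rw [hsum01, Matrix.one_mul]
      _ = (ρ 0 * M11).trace + (ρ 1 * M11).trace := by rw [Matrix.add_mul, Matrix.trace_add]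
      _ = ((c:ℝ):ℂ) := by rw [ht00, ht10, hc]; push_cast; ring
  -- σ
  set σ : Matrix (Fin 2) (Fin 2) ℂ := (((c:ℝ):ℂ))⁻¹ • M11 with hσ
  have hσpsd : σ.PosSemidef := by
    refine Matrix.PosSemidef.of_dotProduct_mulVec_nonneg ?_ ?_
    · show ((((c:ℝ):ℂ))⁻¹ • M11)ᴴ = (((c:ℝ):ℂ))⁻¹ • M11
      rw [Matrix.conjTranspose_smul, hE11.1.1, ← Complex.ofReal_inv, Complex.star_def,
        Complex.conj_ofReal]
    · intro x
      rw [hσ, Matrix.smul_mulVec, dotProduct_smul, smul_eq_mul]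
      apply mul_nonneg _ (hE11.1.dotProduct_mulVec_nonneg x)
      rw [← Complex.ofReal_inv]
      rw [Complex.le_def]
      constructor
      · simp only [Complex.zero_re, Complex.ofReal_re]
        positivity
      · simp
  have hσtr : σ.trace = 1 := by
    rw [hσ, Matrix.trace_smul, htrM11, smul_eq_mul, inv_mul_cancel₀ hcne]
  -- ρ2 * M11 = 0
  have h2M11 : ρ 2 * M11 = 0 := by
    apply psd_mul_eq_zero (hstate 2).1 hE11.1
    rw [← (hP 2).1, hpat.2.2.2]
  have h2σ : ρ 2 * σ = 0 := by
    rw [hσ, mul_smul_comm, h2M11, smul_zero]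
  obtain ⟨hsum2σ, hρ2idem, hσidem⟩ :=
    states_mul_zero (hstate 2).1 (hstate 2).2 hσpsd hσtr h2σ
  obtain ⟨s, hs, hσs⟩ := pure_decomp hσpsd hσtr hσidem
  have hM11 : M11 = ((c:ℝ):ℂ) • Matrix.vecMulVec s (star s) := by
    rw [← hσs, hσ, smul_smul, mul_inv_cancel₀ hcne, one_smul]
  have hρ2 : ρ 2 = 1 - Matrix.vecMulVec s (star s) := by
    rw [← hσs, ← hsum2σ]; abel
  have hM31 : M31 = 1 - M11 - M21 := by rw [← hsum3]; abel
  have hover : (star v ⬝ᵥ s) * (star s ⬝ᵥ v) * ((c:ℝ):ℂ) = ((P 1 0 : ℝ):ℂ) := by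
    rw [← ht10, hρ1v, hM11, mul_smul_comm, Matrix.trace_smul, vmv_mul,
      Matrix.trace_smul, vmv_trace, smul_eq_mul, smul_eq_mul]
    ring
  exact ⟨v, s, hv, hs, hρ1v, hρ0eq, hM12, hM22, hM21, hM11, hρ2, hM31, hover⟩

section Toolkit6

lemma dot_flip (a b : Fin 2 → ℂ) : star a ⬝ᵥ b = star (star b ⬝ᵥ a) := by
  simp only [dotProduct, Fin.sum_univ_two, Pi.star_apply, star_add, star_mul', star_star]
  ring

lemma perp_unit {v : Fin 2 → ℂ} (hv : star v ⬝ᵥ v = 1) :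
    star (![-star (v 1), star (v 0)]) ⬝ᵥ (![-star (v 1), star (v 0)]) = 1 := by
  simp only [dotProduct, Fin.sum_univ_two, Pi.star_apply, Matrix.cons_val_zero,
    Matrix.cons_val_one, Matrix.head_cons, star_neg, star_star] at hv ⊢
  linear_combination hv

lemma perp_orth {v : Fin 2 → ℂ} :
    star v ⬝ᵥ (![-star (v 1), star (v 0)]) = 0 := by
  simp only [dotProduct, Fin.sum_univ_two, Pi.star_apply, Matrix.cons_val_zero,
    Matrix.cons_val_one, Matrix.head_cons]
  ring

lemma perp_orth' {v : Fin 2 → ℂ} :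
    star (![-star (v 1), star (v 0)]) ⬝ᵥ v = 0 := by
  simp only [dotProduct, Fin.sum_univ_two, Pi.star_apply, Matrix.cons_val_zero,
    Matrix.cons_val_one, Matrix.head_cons, star_neg, star_star]
  ring

lemma perp_complete {v : Fin 2 → ℂ} (hv : star v ⬝ᵥ v = 1) :
    Matrix.vecMulVec v (star v)
      + Matrix.vecMulVec (![-star (v 1), star (v 0)]) (star (![-star (v 1), star (v 0)])) = 1 := by
  simp only [dotProduct, Fin.sum_univ_two, Pi.star_apply] at hv
  ext i j
  fin_cases i <;> fin_cases j <;>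
    simp only [Matrix.add_apply, Matrix.vecMulVec_apply, Pi.star_apply, Matrix.cons_val_zero,
      Matrix.cons_val_one, Matrix.head_cons, star_neg, star_star, Matrix.one_apply,
      Fin.zero_eta, Fin.mk_one, if_true, if_false, Fin.isValue, one_ne_zero, zero_ne_one,
      reduceCtorEq, reduceIte]
  all_goals (try ring)
  all_goals linear_combination hv

lemma perp_decomp {v : Fin 2 → ℂ} (hv : star v ⬝ᵥ v = 1) (s : Fin 2 → ℂ) (i : Fin 2) :
    s i = (star v ⬝ᵥ s) * v i
      + (star (![-star (v 1), star (v 0)]) ⬝ᵥ s) * (![-star (v 1), star (v 0)]) i := by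
  simp only [dotProduct, Fin.sum_univ_two, Pi.star_apply] at hv
  fin_cases i <;>
    simp only [dotProduct, Fin.sum_univ_two, Pi.star_apply, Matrix.cons_val_zero,
      Matrix.cons_val_one, Matrix.head_cons, star_neg, star_star, Fin.zero_eta, Fin.mk_one]
  · linear_combination (-(s 0)) * hv
  · linear_combination (-(s 1)) * hv

end Toolkit6

lemma mul_star_eq_zero {z : ℂ} (h : z * star z = 0) : z = 0 := by
  rw [Complex.star_def, Complex.mul_conj] at h
  exact Complex.normSq_eq_zero.mp (by exact_mod_cast h)

lemma pair_unitary (v s v' s' : Fin 2 → ℂ)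
    (hv : star v ⬝ᵥ v = 1) (hs : star s ⬝ᵥ s = 1)
    (hv' : star v' ⬝ᵥ v' = 1) (hs' : star s' ⬝ᵥ s' = 1)
    (hover : (star v ⬝ᵥ s) * (star s ⬝ᵥ v) = (star v' ⬝ᵥ s') * (star s' ⬝ᵥ v')) :
    ∃ U : Matrix (Fin 2) (Fin 2) ℂ,
      U * Uᴴ = 1 ∧ Uᴴ * U = 1 ∧
      U * Matrix.vecMulVec v (star v) * Uᴴ = Matrix.vecMulVec v' (star v') ∧
      U * Matrix.vecMulVec s (star s) * Uᴴ = Matrix.vecMulVec s' (star s') := by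
  set w : Fin 2 → ℂ := ![-star (v 1), star (v 0)] with hwdef
  set w' : Fin 2 → ℂ := ![-star (v' 1), star (v' 0)] with hw'def
  have hww : star w ⬝ᵥ w = 1 := perp_unit hv
  have hvw : star v ⬝ᵥ w = 0 := perp_orth
  have hwv : star w ⬝ᵥ v = 0 := perp_orth'
  have hcomp : Matrix.vecMulVec v (star v) + Matrix.vecMulVec w (star w) = 1 := perp_complete hv
  have hww' : star w' ⬝ᵥ w' = 1 := perp_unit hv'
  have hvw' : star v' ⬝ᵥ w' = 0 := perp_orth
  have hwv' : star w' ⬝ᵥ v' = 0 := perp_orth'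
  have hcomp' : Matrix.vecMulVec v' (star v') + Matrix.vecMulVec w' (star w') = 1 :=
    perp_complete hv'
  set α : ℂ := star v ⬝ᵥ s with hα
  set β : ℂ := star w ⬝ᵥ s with hβ
  set α' : ℂ := star v' ⬝ᵥ s' with hα'
  set β' : ℂ := star w' ⬝ᵥ s' with hβ'
  have hαα : α * star α = α' * star α' := by
    rw [dot_flip s v, dot_flip s' v'] at hover
    exact hover
  have hnorm : α * star α + β * star β = 1 := by
    rw [hα, hβ, hwdef]
    simp only [dotProduct, Fin.sum_univ_two, Pi.star_apply, Matrix.cons_val_zero,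
      Matrix.cons_val_one, Matrix.head_cons, star_neg, star_star, star_add, star_mul']
    simp only [dotProduct, Fin.sum_univ_two, Pi.star_apply] at hv hs
    linear_combination (star (s 0) * s 0 + star (s 1) * s 1) * hv + hs
  have hnorm' : α' * star α' + β' * star β' = 1 := by
    rw [hα', hβ', hw'def]
    simp only [dotProduct, Fin.sum_univ_two, Pi.star_apply, Matrix.cons_val_zero,
      Matrix.cons_val_one, Matrix.head_cons, star_neg, star_star, star_add, star_mul']
    simp only [dotProduct, Fin.sum_univ_two, Pi.star_apply] at hv' hs'
    linear_combination (star (s' 0) * s' 0 + star (s' 1) * s' 1) * hv' + hs'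
  have hββ : β * star β = β' * star β' := by linear_combination hnorm - hnorm' - hαα
  set φ₁ : ℂ := if α = 0 then 1 else α' / α with hφ₁
  set φ₂ : ℂ := if β = 0 then 1 else β' / β with hφ₂
  have hφ₁u : φ₁ * star φ₁ = 1 := by
    rw [hφ₁]
    by_cases h0 : α = 0
    · simp [h0]
    · have hne : α * star α ≠ 0 := mul_ne_zero h0 (star_ne_zero.mpr h0)
      rw [if_neg h0, star_div₀, div_mul_div_comm, ← hαα, div_self hne]
  have hφ₂u : φ₂ * star φ₂ = 1 := by
    rw [hφ₂]
    by_cases h0 : β = 0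
    · simp [h0]
    · have hne : β * star β ≠ 0 := mul_ne_zero h0 (star_ne_zero.mpr h0)
      rw [if_neg h0, star_div₀, div_mul_div_comm, ← hββ, div_self hne]
  have e2 : α * star β * (φ₁ * star φ₂) = α' * star β' := by
    by_cases ha0 : α = 0
    · have : α' = 0 := by
        have h2 : α' * star α' = 0 := by rw [← hαα, ha0, zero_mul]
        exact mul_star_eq_zero h2
      simp [ha0, this]
    · by_cases hb0 : β = 0
      · have : β' = 0 := by
          have h2 : β' * star β' = 0 := by rw [← hββ, hb0, zero_mul]
          exact mul_star_eq_zero h2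
        simp [hb0, this]
      · have hne2 : α * star β ≠ 0 := mul_ne_zero ha0 (star_ne_zero.mpr hb0)
        rw [hφ₁, hφ₂, if_neg ha0, if_neg hb0, star_div₀, div_mul_div_comm,
          mul_comm (α * star β), div_mul_eq_mul_div, mul_div_assoc, div_self hne2, mul_one]
  have e3 : β * star α * (φ₂ * star φ₁) = β' * star α' := by
    by_cases hb0 : β = 0
    · have : β' = 0 := by
        have h2 : β' * star β' = 0 := by rw [← hββ, hb0, zero_mul]
        exact mul_star_eq_zero h2
      simp [hb0, this]
    · by_cases ha0 : α = 0
      · have : α' = 0 := by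
          have h2 : α' * star α' = 0 := by rw [← hαα, ha0, zero_mul]
          exact mul_star_eq_zero h2
        simp [ha0, this]
      · have hne2 : β * star α ≠ 0 := mul_ne_zero hb0 (star_ne_zero.mpr ha0)
        rw [hφ₁, hφ₂, if_neg hb0, if_neg ha0, star_div₀, div_mul_div_comm,
          mul_comm (β * star α), div_mul_eq_mul_div, mul_div_assoc, div_self hne2, mul_one]
  set U : Matrix (Fin 2) (Fin 2) ℂ :=
    φ₁ • Matrix.vecMulVec v' (star v) + φ₂ • Matrix.vecMulVec w' (star w) with hU
  have hUH : Uᴴ = star φ₁ • Matrix.vecMulVec v (star v')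
      + star φ₂ • Matrix.vecMulVec w (star w') := by
    rw [hU, Matrix.conjTranspose_add, Matrix.conjTranspose_smul, Matrix.conjTranspose_smul,
      vmv_conjT, vmv_conjT]
  have hφ₁u' : star φ₁ * φ₁ = 1 := by rw [mul_comm]; exact hφ₁u
  have hφ₂u' : star φ₂ * φ₂ = 1 := by rw [mul_comm]; exact hφ₂u
  have hcvv : U * Matrix.vecMulVec v (star v) * Uᴴ
      = (φ₁ * star φ₁) • Matrix.vecMulVec v' (star v') := by
    rw [hU, hUH]
    simp only [Matrix.add_mul, Matrix.mul_add, smul_mul_assoc, mul_smul_comm, vmv_mul,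
      smul_smul, hv, hvw, hwv, hww, zero_smul, smul_zero, one_smul, mul_zero, mul_one,
      zero_mul, one_mul, add_zero, zero_add, zero_smul, smul_zero]
  have hcvw : U * Matrix.vecMulVec v (star w) * Uᴴ
      = (φ₁ * star φ₂) • Matrix.vecMulVec v' (star w') := by
    rw [hU, hUH]
    simp only [Matrix.add_mul, Matrix.mul_add, smul_mul_assoc, mul_smul_comm, vmv_mul,
      smul_smul, hv, hvw, hwv, hww, zero_smul, smul_zero, one_smul, mul_zero, mul_one,
      zero_mul, one_mul, add_zero, zero_add]
  have hcwv : U * Matrix.vecMulVec w (star v) * Uᴴ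
      = (φ₂ * star φ₁) • Matrix.vecMulVec w' (star v') := by
    rw [hU, hUH]
    simp only [Matrix.add_mul, Matrix.mul_add, smul_mul_assoc, mul_smul_comm, vmv_mul,
      smul_smul, hv, hvw, hwv, hww, zero_smul, smul_zero, one_smul, mul_zero, mul_one,
      zero_mul, one_mul, add_zero, zero_add]
  have hcww : U * Matrix.vecMulVec w (star w) * Uᴴ
      = (φ₂ * star φ₂) • Matrix.vecMulVec w' (star w') := by
    rw [hU, hUH]
    simp only [Matrix.add_mul, Matrix.mul_add, smul_mul_assoc, mul_smul_comm, vmv_mul,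
      smul_smul, hv, hvw, hwv, hww, zero_smul, smul_zero, one_smul, mul_zero, mul_one,
      zero_mul, one_mul, add_zero, zero_add]
  have hUU : U * Uᴴ = 1 := by
    rw [hU, hUH]
    simp only [Matrix.add_mul, Matrix.mul_add, smul_mul_assoc, mul_smul_comm, vmv_mul,
      smul_smul, hv, hvw, hwv, hww, zero_smul, smul_zero, one_smul, mul_zero, mul_one,
      zero_mul, one_mul, add_zero, zero_add]
    rw [hφ₁u', hφ₂u', one_smul, one_smul, hcomp']
  have hUHU : Uᴴ * U = 1 := by
    rw [hU, hUH]
    simp only [Matrix.add_mul, Matrix.mul_add, smul_mul_assoc, mul_smul_comm, vmv_mul,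
      smul_smul, hv', hvw', hwv', hww', zero_smul, smul_zero, one_smul, mul_zero, mul_one,
      zero_mul, one_mul, add_zero, zero_add]
    rw [hφ₁u, hφ₂u, one_smul, one_smul, hcomp]
  have hσexp : Matrix.vecMulVec s (star s)
      = (α * star α) • Matrix.vecMulVec v (star v) + (α * star β) • Matrix.vecMulVec v (star w)
      + (β * star α) • Matrix.vecMulVec w (star v)
      + (β * star β) • Matrix.vecMulVec w (star w) := by
    ext i j
    have hi := perp_decomp hv s i
    have hj := congrArg star (perp_decomp hv s j)
    rw [← hwdef, ← hα, ← hβ] at hi hj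
    simp only [star_add, star_mul'] at hj
    simp only [Matrix.add_apply, Matrix.smul_apply, Matrix.vecMulVec_apply, Pi.star_apply,
      smul_eq_mul, hi, hj]
    ring
  have hσ'exp : Matrix.vecMulVec s' (star s')
      = (α' * star α') • Matrix.vecMulVec v' (star v')
      + (α' * star β') • Matrix.vecMulVec v' (star w')
      + (β' * star α') • Matrix.vecMulVec w' (star v')
      + (β' * star β') • Matrix.vecMulVec w' (star w') := by
    ext i j
    have hi := perp_decomp hv' s' i
    have hj := congrArg star (perp_decomp hv' s' j)
    rw [← hw'def, ← hα', ← hβ'] at hi hj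
    simp only [star_add, star_mul'] at hj
    simp only [Matrix.add_apply, Matrix.smul_apply, Matrix.vecMulVec_apply, Pi.star_apply,
      smul_eq_mul, hi, hj]
    ring
  have c1 : α * star α * (φ₁ * star φ₁) = α' * star α' := by
    linear_combination (α * star α) * hφ₁u + hαα
  have c4 : β * star β * (φ₂ * star φ₂) = β' * star β' := by
    linear_combination (β * star β) * hφ₂u + hββ
  have e2' : α * star β * (φ₁ * star φ₂) = α' * star β' := e2
  have e3' : β * star α * (φ₂ * star φ₁) = β' * star α' := e3
  refine ⟨U, hUU, hUHU, ?_, ?_⟩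
  · rw [hcvv, hφ₁u, one_smul]
  · rw [hσexp]
    simp only [Matrix.mul_add, Matrix.add_mul, mul_smul_comm, smul_mul_assoc]
    rw [hcvv, hcvw, hcwv, hcww]
    simp only [smul_smul]
    rw [c1, e2', e3', c4, ← hσ'exp]

/-- Uniqueness part of Lemma 1: any two qubit realizations of a USD correlation matrix `P`
with `P 0 0 + P 1 0 > 0` are related by a global unitary. -/
theorem usd2_realization_unique (P : Matrix (Fin 3) (Fin 3) ℝ)
    (hpat : USDpattern P) (hpos : P 0 0 + P 1 0 > 0)
    (ρ ρ' : Fin 3 → Matrix (Fin 2) (Fin 2) ℂ)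
    (M11 M21 M31 M12 M22 M11' M21' M31' M12' M22' : Matrix (Fin 2) (Fin 2) ℂ)
    (h1 : IsRealization P ρ M11 M21 M31 M12 M22)
    (h2 : IsRealization P ρ' M11' M21' M31' M12' M22') :
    ∃ U : Matrix (Fin 2) (Fin 2) ℂ, U ∈ Matrix.unitaryGroup (Fin 2) ℂ ∧
      (∀ x, ρ' x = U * ρ x * Uᴴ) ∧
      M11' = U * M11 * Uᴴ ∧ M21' = U * M21 * Uᴴ ∧ M31' = U * M31 * Uᴴ ∧
      M12' = U * M12 * Uᴴ ∧ M22' = U * M22 * Uᴴ := by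
  obtain ⟨v, s, hv, hs, hρ1, hρ0, hM12, hM22, hM21, hM11, hρ2, hM31, hov1⟩ :=
    struct P hpat hpos ρ M11 M21 M31 M12 M22 h1
  obtain ⟨v', s', hv', hs', hρ1', hρ0', hM12', hM22', hM21', hM11', hρ2', hM31', hov2⟩ :=
    struct P hpat hpos ρ' M11' M21' M31' M12' M22' h2
  have hcne : ((P 0 0 + P 1 0 : ℝ) : ℂ) ≠ 0 := Complex.ofReal_ne_zero.mpr (ne_of_gt hpos)
  have hover : (star v ⬝ᵥ s) * (star s ⬝ᵥ v) = (star v' ⬝ᵥ s') * (star s' ⬝ᵥ v') := by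
    apply mul_right_cancel₀ hcne
    rw [hov1, hov2]
  obtain ⟨U, hUU, hUHU, kv, ks⟩ := pair_unitary v s v' s' hv hs hv' hs' hover
  have kρ1 : U * ρ 1 * Uᴴ = ρ' 1 := by rw [hρ1, hρ1']; exact kv
  have kρ0 : U * ρ 0 * Uᴴ = ρ' 0 := by
    rw [hρ0, hρ0', Matrix.mul_sub, Matrix.mul_one, Matrix.sub_mul, hUU, kρ1]
  have kρ2 : U * ρ 2 * Uᴴ = ρ' 2 := by
    rw [hρ2, hρ2', Matrix.mul_sub, Matrix.mul_one, Matrix.sub_mul, hUU, ks]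
  have kM11 : U * M11 * Uᴴ = M11' := by
    rw [hM11, hM11', mul_smul_comm, smul_mul_assoc, ks]
  have kM21 : U * M21 * Uᴴ = M21' := by
    rw [hM21, hM21', mul_smul_comm, smul_mul_assoc, kρ0]
  have kM31 : U * M31 * Uᴴ = M31' := by
    rw [hM31, hM31', Matrix.mul_sub, Matrix.mul_sub, Matrix.mul_one, Matrix.sub_mul,
      Matrix.sub_mul, hUU, kM11, kM21]
  have kM12 : U * M12 * Uᴴ = M12' := by rw [hM12, hM12']; exact kρ1
  have kM22 : U * M22 * Uᴴ = M22' := by rw [hM22, hM22']; exact kρ0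
  refine ⟨U, ?_, ?_, kM11.symm, kM21.symm, kM31.symm, kM12.symm, kM22.symm⟩
  · rw [Matrix.mem_unitaryGroup_iff, Matrix.star_eq_conjTranspose]
    exact hUU
  · intro x
    fin_cases x
    · exact kρ0.symm
    · exact kρ1.symm
    · exact kρ2.symm
end

section
/- Theorem 1: there exists a matrix 𝒫 ∈ USD₂ that is not contained in the convex hull (in the space of real 3×3 matrices) of the set USD₂ ∩ SIM₂. -/
open Matrix
open scoped ComplexOrder

section Helpers

open scoped MatrixOrder

abbrev M2 := Matrix (Fin 2) (Fin 2) ℂ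


lemma diag_nonneg {A : M2} (hA : A.PosSemidef) (i : Fin 2) : 0 ≤ A i i := by
  have := hA.diag_nonneg (i := i)
  simpa [dotProduct, Matrix.mulVec, Pi.single_apply, Fin.sum_univ_two] using this

lemma trace_nonneg2 {A : M2} (hA : A.PosSemidef) : 0 ≤ A.trace := by
  rw [Matrix.trace_fin_two]
  exact add_nonneg (diag_nonneg hA 0) (diag_nonneg hA 1)

lemma real_of_nonneg {z : ℂ} (h : 0 ≤ z) : z = (z.re : ℂ) ∧ 0 ≤ z.re := by
  rw [Complex.le_def] at h
  refine ⟨?_, by simpa using h.1⟩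
  apply Complex.ext <;> simp [← h.2]

lemma psd_trace_zero {A : M2} (hA : A.PosSemidef) (h : A.trace = 0) : A = 0 := by
  obtain ⟨B, rfl⟩ := CStarAlgebra.nonneg_iff_eq_star_mul_self.mp hA.nonneg
  have h' : ((Complex.normSq (B 0 0) + Complex.normSq (B 1 0)
      + Complex.normSq (B 0 1) + Complex.normSq (B 1 1) : ℝ) : ℂ) = 0 := by
    rw [← h, Matrix.trace_fin_two]
    simp [Matrix.star_eq_conjTranspose, Matrix.mul_apply, Fin.sum_univ_two, Matrix.conjTranspose_apply,
      Complex.star_def, Complex.normSq_eq_conj_mul_self]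
    push_cast
    ring
  have h2 : Complex.normSq (B 0 0) + Complex.normSq (B 1 0)
      + Complex.normSq (B 0 1) + Complex.normSq (B 1 1) = 0 := by exact_mod_cast h'
  have n0 := Complex.normSq_nonneg (B 0 0)
  have n1 := Complex.normSq_nonneg (B 1 0)
  have n2 := Complex.normSq_nonneg (B 0 1)
  have n3 := Complex.normSq_nonneg (B 1 1)
  have e00 : B 0 0 = 0 := by rw [← Complex.normSq_eq_zero]; linarith
  have e01 : B 0 1 = 0 := by rw [← Complex.normSq_eq_zero]; linarith
  have e10 : B 1 0 = 0 := by rw [← Complex.normSq_eq_zero]; linarith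
  have e11 : B 1 1 = 0 := by rw [← Complex.normSq_eq_zero]; linarith
  have hB : B = 0 := by
    ext i j
    fin_cases i <;> fin_cases j <;> simp [e00, e01, e10, e11]
  rw [hB]; simp

lemma pair_nonneg {A B : M2} (hA : A.PosSemidef) (hB : B.PosSemidef) :
    0 ≤ (A * B).trace := by
  have hs : CFC.sqrt A * CFC.sqrt A = A := CFC.sqrt_mul_sqrt_self A hA.nonneg
  have hherm : (CFC.sqrt A).conjTranspose = CFC.sqrt A := (CFC.sqrt_nonneg A).posSemidef.1
  have hpsd : (CFC.sqrt A * B * CFC.sqrt A).PosSemidef := by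
    have := hB.conjTranspose_mul_mul_same (CFC.sqrt A)
    rwa [hherm] at this
  have htr : (CFC.sqrt A * B * CFC.sqrt A).trace = (A * B).trace := by
    rw [Matrix.trace_mul_cycle, hs]
  rw [← htr]
  exact trace_nonneg2 hpsd

lemma pair_zero {A B : M2} (hA : A.PosSemidef) (hB : B.PosSemidef)
    (h : (A * B).trace = 0) : A * B = 0 := by
  set S := CFC.sqrt A with hSdef
  set T := CFC.sqrt B with hTdef
  have hs : S * S = A := CFC.sqrt_mul_sqrt_self A hA.nonneg
  have ht : T * T = B := CFC.sqrt_mul_sqrt_self B hB.nonneg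
  have hShe : S.conjTranspose = S := (CFC.sqrt_nonneg A).posSemidef.1
  have hThe : T.conjTranspose = T := (CFC.sqrt_nonneg B).posSemidef.1
  have hpsd : (S * B * S).PosSemidef := by
    have := hB.conjTranspose_mul_mul_same S
    rwa [hShe] at this
  have htr : (S * B * S).trace = 0 := by
    rw [Matrix.trace_mul_cycle, hs, h]
  have hz : S * B * S = 0 := psd_trace_zero hpsd htr
  have hx : (T * S).conjTranspose * (T * S) = S * B * S := by
    rw [Matrix.conjTranspose_mul, hShe, hThe, Matrix.mul_assoc,
      ← Matrix.mul_assoc T T S, ht, ← Matrix.mul_assoc]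
  have hts : T * S = 0 := by
    rw [← Matrix.conjTranspose_mul_self_eq_zero (A := T * S), hx, hz]
  have hst : S * T = 0 := by
    have := congrArg Matrix.conjTranspose hts
    rwa [Matrix.conjTranspose_mul, hShe, hThe, Matrix.conjTranspose_zero] at this
  have : A * B = S * (S * T) * T := by
    rw [← hs, ← ht]; simp [Matrix.mul_assoc]
  rw [this, hst, Matrix.mul_zero, Matrix.zero_mul]

lemma ch2 (A : M2) : A * A - A.trace • A + A.det • (1 : M2) = 0 := by
  ext i j
  fin_cases i <;> fin_cases j <;>
    simp [Matrix.mul_apply, Fin.sum_univ_two, Matrix.trace_fin_two, Matrix.det_fin_two,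
      Matrix.one_apply, Matrix.smul_apply, smul_eq_mul] <;> ring

lemma pair_real {A B : M2} (hA : A.PosSemidef) (hB : B.PosSemidef) :
    (A * B).trace = (((A * B).trace.re : ℝ) : ℂ) ∧ 0 ≤ (A * B).trace.re :=
  real_of_nonneg (pair_nonneg hA hB)

lemma det_zero_of_mul_eq_zero_left {A B : M2} (h : A * B = 0) (hB : B ≠ 0) : A.det = 0 := by
  by_contra hd
  have hu : IsUnit A.det := isUnit_iff_ne_zero.mpr hd
  have : B = 0 := by
    have := congrArg (fun X => A⁻¹ * X) h
    simpa [← Matrix.mul_assoc, Matrix.nonsing_inv_mul A hu] using this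
  exact hB this

lemma idem_of_trace_det_s3 {A : M2} (htr : A.trace = 1) (hdet : A.det = 0) : A * A = A := by
  have := ch2 A
  rw [htr, hdet] at this
  simpa [sub_eq_zero] using this

lemma det_zero_of_idem {A : M2} (htr : A.trace = 1) (hidem : A * A = A) : A.det = 0 := by
  have := ch2 A
  rw [htr, hidem] at this
  have h1 : A.det • (1 : M2) = 0 := by simpa [sub_eq_zero] using this
  have := congrFun (congrFun h1 0) 0
  simpa [Matrix.smul_apply, Matrix.one_apply] using this

lemma pure_sandwich {σ X : M2} (hσ : σ.PosSemidef) (hX : X.PosSemidef)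
    (hidem : σ * σ = σ) (htr : σ.trace = 1) :
    σ * X * σ = (σ * X).trace • σ := by
  have hdet : σ.det = 0 := det_zero_of_idem htr hidem
  set c : ℂ := (σ * X).trace with hc
  have hcreal : star c = c := by
    obtain ⟨h1, _⟩ := pair_real hσ hX
    rw [← hc] at h1
    rw [h1]
    exact Complex.conj_ofReal _
  set Z : M2 := σ * X * σ - c • σ with hZ
  have hZform : Z = σ * (X - c • (1 : M2)) * σ := by
    rw [hZ, Matrix.mul_sub, Matrix.sub_mul]
    congr 1
    rw [Matrix.mul_smul, Matrix.mul_one, Matrix.smul_mul, hidem]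
  have hdetZ : Z.det = 0 := by
    rw [hZform, Matrix.det_mul, Matrix.det_mul, hdet]; ring
  have htrZ : Z.trace = 0 := by
    rw [hZ, Matrix.trace_sub, Matrix.trace_smul, htr, Matrix.trace_mul_cycle, hidem,
      smul_eq_mul, mul_one, sub_self]
  have hZZ : Z * Z = 0 := by
    have := ch2 Z
    rw [htrZ, hdetZ] at this
    simpa using this
  have hZherm : Z.conjTranspose = Z := by
    rw [hZ, Matrix.conjTranspose_sub, Matrix.conjTranspose_smul, hσ.1, hcreal]
    congr 1
    rw [Matrix.conjTranspose_mul, Matrix.conjTranspose_mul, hσ.1, hX.1, Matrix.mul_assoc]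
  have hZ0 : Z = 0 := by
    rw [← Matrix.conjTranspose_mul_self_eq_zero (A := Z), hZherm, hZZ]
  rw [hZ] at hZ0
  rw [sub_eq_zero] at hZ0
  exact hZ0

lemma trace_one_ne_zero {A : M2} (htr : A.trace = 1) : A ≠ 0 := by
  intro h
  rw [h] at htr
  simp at htr

lemma orth_sum {σ τ E : M2} (hσ : σ.PosSemidef) (hτ : τ.PosSemidef)
    (hσt : σ.trace = 1) (hτt : τ.trace = 1)
    (hE : E.PosSemidef) (hE1 : (1 - E).PosSemidef)
    (h1 : (σ * E).trace = 0) (h2 : (τ * (1 - E)).trace = 0) :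
    σ + τ = 1 ∧ σ * σ = σ ∧ τ * τ = τ := by
  have hσE : σ * E = 0 := pair_zero hσ hE h1
  have hτE : τ * (1 - E) = 0 := pair_zero hτ hE1 h2
  have hτeq : τ * E = τ := by
    have := hτE
    rw [Matrix.mul_sub, Matrix.mul_one, sub_eq_zero] at this
    exact this.symm
  have hEτ : E * τ = τ := by
    have := congrArg Matrix.conjTranspose hτeq
    rwa [Matrix.conjTranspose_mul, hτ.1, hE.1] at this
  have hστ : σ * τ = 0 := by
    rw [← hEτ, ← Matrix.mul_assoc, hσE, Matrix.zero_mul]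
  have hτσ : τ * σ = 0 := by
    have := congrArg Matrix.conjTranspose hστ
    rwa [Matrix.conjTranspose_mul, hσ.1, hτ.1, Matrix.conjTranspose_zero] at this
  have hdσ : σ.det = 0 := det_zero_of_mul_eq_zero_left hστ (trace_one_ne_zero hτt)
  have hdτ : τ.det = 0 := det_zero_of_mul_eq_zero_left hτσ (trace_one_ne_zero hσt)
  have hσi : σ * σ = σ := idem_of_trace_det_s3 hσt hdσ
  have hτi : τ * τ = τ := idem_of_trace_det_s3 hτt hdτ
  have hPi : (σ + τ) * (σ + τ) = σ + τ := by
    rw [Matrix.add_mul, Matrix.mul_add, Matrix.mul_add, hσi, hτi, hστ, hτσ]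
    simp
  set R : M2 := 1 - (σ + τ) with hR
  have hRherm : R.conjTranspose = R := by
    rw [hR, Matrix.conjTranspose_sub, Matrix.conjTranspose_add, hσ.1, hτ.1, Matrix.conjTranspose_one]
  have hRi : R * R = R := by
    rw [hR, Matrix.mul_sub, Matrix.sub_mul, Matrix.sub_mul, hPi]
    simp only [Matrix.one_mul, Matrix.mul_one]
    abel
  have hRpsd : R.PosSemidef := by
    have := Matrix.posSemidef_conjTranspose_mul_self R
    rwa [hRherm, hRi] at this
  have hRtr : R.trace = 0 := by
    rw [hR, Matrix.trace_sub, Matrix.trace_add, hσt, hτt, Matrix.trace_one]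
    norm_num
  have : R = 0 := psd_trace_zero hRpsd hRtr
  rw [hR, sub_eq_zero] at this
  exact ⟨this.symm, hσi, hτi⟩

lemma psd2 (x y z : ℝ) (hx : 0 < x) (hz : 0 ≤ z) (h : y ^ 2 ≤ x * z) :
    (!![(x : ℂ), (y : ℂ); (y : ℂ), (z : ℂ)]).PosSemidef := by
  refine Matrix.posSemidef_iff_dotProduct_mulVec.mpr ⟨?_, ?_⟩
  · ext i j
    fin_cases i <;> fin_cases j <;>
      simp [Matrix.conjTranspose_apply, Complex.star_def, Complex.conj_ofReal]
  · intro v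
    have hexp : dotProduct (star v) ((!![(x : ℂ), (y : ℂ); (y : ℂ), (z : ℂ)]) *ᵥ v)
        = star (v 0) * ((x : ℂ) * v 0 + (y : ℂ) * v 1)
          + star (v 1) * ((y : ℂ) * v 0 + (z : ℂ) * v 1) := by
      simp [dotProduct, Matrix.mulVec, Fin.sum_univ_two]
    rw [hexp, Complex.le_def]
    set c := (v 0).re; set d := (v 0).im; set e := (v 1).re; set f := (v 1).im
    constructor
    · simp only [Complex.add_re, Complex.mul_re, Complex.mul_im, Complex.add_im,
        Complex.ofReal_re, Complex.ofReal_im, Complex.zero_re, RCLike.star_def,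
        Complex.conj_re, Complex.conj_im]
      nlinarith [sq_nonneg (x * c + y * e), sq_nonneg (x * d + y * f),
        mul_nonneg (sub_nonneg.mpr h) (add_nonneg (sq_nonneg e) (sq_nonneg f)),
        hx.le, hz, sq_nonneg c, sq_nonneg d]
    · simp only [Complex.add_im, Complex.mul_re, Complex.mul_im, Complex.add_re,
        Complex.ofReal_re, Complex.ofReal_im, Complex.zero_im, RCLike.star_def,
        Complex.conj_re, Complex.conj_im]
      ring

lemma pair_le_one {ρ E : M2} (hρ : ρ.PosSemidef) (htr : ρ.trace = 1)
    (hE1 : (1 - E).PosSemidef) : ((ρ * E).trace).re ≤ 1 := by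
  have h := (pair_real hρ hE1).2
  have hexp : (ρ * (1 - E)).trace = ρ.trace - (ρ * E).trace := by
    rw [Matrix.mul_sub, Matrix.mul_one, Matrix.trace_sub]
  rw [hexp, htr] at h
  simp only [Complex.sub_re, Complex.one_re] at h
  linarith

lemma smul_trace_re (p : ℝ) (A B : M2) : ((A * (p • B)).trace).re = p * ((A * B).trace).re := by
  rw [Matrix.mul_smul, Matrix.trace_smul]
  simp [Complex.real_smul]

lemma sim_bound {Q : Matrix (Fin 3) (Fin 3) ℝ} (hpat : USDpattern Q)
    {ρ : Fin 3 → Matrix (Fin 2) (Fin 2) ℂ} {M11 M21 M31 M12 M22 : M2}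
    (hr : IsRealization Q ρ M11 M21 M31 M12 M22) (hs : Simulable M11 M21 M31) :
    Q 0 0 + Q 0 1 ≤ Q 2 1 + Q 2 2 := by
  obtain ⟨hstates, hM11, hM21, hM31, hsum3, hM12, hM22, hsum2, hprob⟩ := hr
  obtain ⟨p02, p11, p12, p20⟩ := hpat
  obtain ⟨hρ0, hρ0t⟩ := hstates 0
  obtain ⟨hρ1, hρ1t⟩ := hstates 1
  obtain ⟨hρ2, hρ2t⟩ := hstates 2
  obtain ⟨e00, e01, e02⟩ := hprob 0
  obtain ⟨e10, e11, e12⟩ := hprob 1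
  obtain ⟨e20, e21, e22⟩ := hprob 2
  -- trace equalities as complex numbers
  have h02 : (ρ 0 * M12).trace = 0 := by
    rw [(pair_real hρ0 hM12.1).1, ← e02, p02]; simp
  have h11 : (ρ 1 * M21).trace = 0 := by
    rw [(pair_real hρ1 hM21.1).1, ← e11, p11]; simp
  have h20c : (ρ 2 * M11).trace = 0 := by
    rw [(pair_real hρ2 hM11.1).1, ← e20, p20]; simp
  have h12c : (ρ 1 * M12).trace = 1 := by
    rw [(pair_real hρ1 hM12.1).1, ← e12, p12]; simp
  have h12' : (ρ 1 * (1 - M12)).trace = 0 := by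
    rw [Matrix.mul_sub, Matrix.mul_one, Matrix.trace_sub, hρ1t, h12c, sub_self]
  -- ρ0 + ρ1 = 1 and purity
  obtain ⟨hsum01, hρ0i, hρ1i⟩ := orth_sum hρ0 hρ1 hρ0t hρ1t hM12.1 hM12.2 h02 h12'
  -- M12 = ρ 1
  have hρ0M12 : ρ 0 * M12 = 0 := pair_zero hρ0 hM12.1 h02
  have hM12ρ0 : M12 * ρ 0 = 0 := by
    have := congrArg Matrix.conjTranspose hρ0M12
    rwa [Matrix.conjTranspose_mul, hρ0.1, hM12.1.1, Matrix.conjTranspose_zero] at this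
  have hρ1M12 : ρ 1 * M12 = ρ 1 := by
    have := pair_zero hρ1 hM12.2 h12'
    rw [Matrix.mul_sub, Matrix.mul_one, sub_eq_zero] at this
    exact this.symm
  have hM12ρ1 : M12 * ρ 1 = ρ 1 := by
    have := congrArg Matrix.conjTranspose hρ1M12
    rwa [Matrix.conjTranspose_mul, hρ1.1, hM12.1.1] at this
  have hM12eq : M12 = ρ 1 := by
    calc M12 = M12 * (ρ 0 + ρ 1) := by rw [hsum01, Matrix.mul_one]
    _ = ρ 1 := by rw [Matrix.mul_add, hM12ρ0, hM12ρ1, zero_add]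
  -- M21 = a • ρ0
  have hρ1M21 : ρ 1 * M21 = 0 := pair_zero hρ1 hM21.1 h11
  have hM21ρ1 : M21 * ρ 1 = 0 := by
    have := congrArg Matrix.conjTranspose hρ1M21
    rwa [Matrix.conjTranspose_mul, hρ1.1, hM21.1.1, Matrix.conjTranspose_zero] at this
  set a : ℝ := Q 0 1 with ha
  have hc21 : (ρ 0 * M21).trace = (a : ℂ) := by
    rw [(pair_real hρ0 hM21.1).1, ← e01]
  have hM21eq : M21 = (a : ℂ) • ρ 0 := by
    have h1 : M21 = ρ 0 * M21 := by
      calc M21 = (ρ 0 + ρ 1) * M21 := by rw [hsum01, Matrix.one_mul]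
      _ = ρ 0 * M21 := by rw [Matrix.add_mul, hρ1M21, add_zero]
    have h2 : M21 = M21 * ρ 0 := by
      calc M21 = M21 * (ρ 0 + ρ 1) := by rw [hsum01, Matrix.mul_one]
      _ = M21 * ρ 0 := by rw [Matrix.mul_add, hM21ρ1, add_zero]
    calc M21 = ρ 0 * M21 * ρ 0 := by rw [← h1, ← h2]
    _ = (ρ 0 * M21).trace • ρ 0 := pure_sandwich hρ0 hM21.1 hρ0i hρ0t
    _ = (a : ℂ) • ρ 0 := by rw [hc21]
  -- basic real quantities
  set t : ℝ := ((ρ 2 * ρ 0).trace).re with hT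
  set u : ℝ := ((ρ 2 * ρ 1).trace).re with hu
  have ht0 : 0 ≤ t := (pair_real hρ2 hρ0).2
  have hu0 : 0 ≤ u := (pair_real hρ2 hρ1).2
  have htu : t + u = 1 := by
    have : (ρ 2 * ρ 0).trace + (ρ 2 * ρ 1).trace = 1 := by
      rw [← Matrix.trace_add, ← Matrix.mul_add, hsum01, Matrix.mul_one, hρ2t]
    have := congrArg Complex.re this
    simpa [Complex.add_re] using this
  have ha0 : 0 ≤ a := by rw [e01]; exact (pair_real hρ0 hM21.1).2
  have ha1 : a ≤ 1 := by rw [e01]; exact pair_le_one hρ0 hρ0t hM21.2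
  have ht1 : t ≤ 1 := by linarith
  -- values of Q 2 1 and Q 2 2
  have hQ21 : Q 2 1 = a * t := by
    rw [e21, hM21eq, Matrix.mul_smul, Matrix.trace_smul]
    rw [(pair_real hρ2 hρ0).1]
    push_cast
    simp [← hT]
  have hQ22 : Q 2 2 = u := by rw [e22, hM12eq]
  rw [hQ21, hQ22]
  -- Simulability
  obtain ⟨p1, p2, p3, N1, N2, N3, hp1, hp2, hp3, hpsum, hN1, hN2, hN3, hd11, hd21, hd31⟩ := hs
  rcases eq_or_lt_of_le hp1 with hp1z | hp1pos
  · -- p1 = 0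
    have hM11e : M11 = p3 • N3 := by rw [hd11, ← hp1z]; simp
    have hM21e : M21 = p2 • N2 := by rw [hd21, ← hp1z]; simp
    have hap2 : a ≤ p2 := by
      have : a = p2 * ((ρ 0 * N2).trace).re := by
        rw [e01, hM21e, smul_trace_re]
      rw [this]
      have hb1 : ((ρ 0 * N2).trace).re ≤ 1 := pair_le_one hρ0 hρ0t hN2.2
      exact mul_le_of_le_one_right hp2 hb1
    by_cases hM11z : M11 = 0
    · have hQ00 : Q 0 0 = 0 := by rw [e00, hM11z]; simp
      rw [hQ00]
      nlinarith
    · -- M11 ≠ 0 : ρ2 is pure, M11 = b • (1 - ρ2)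
      have hρ2M11 : ρ 2 * M11 = 0 := pair_zero hρ2 hM11.1 h20c
      have hM11ρ2 : M11 * ρ 2 = 0 := by
        have := congrArg Matrix.conjTranspose hρ2M11
        rwa [Matrix.conjTranspose_mul, hρ2.1, hM11.1.1, Matrix.conjTranspose_zero] at this
      have hdet2 : (ρ 2).det = 0 := det_zero_of_mul_eq_zero_left hρ2M11 hM11z
      have hρ2i : ρ 2 * ρ 2 = ρ 2 := idem_of_trace_det_s3 hρ2t hdet2
      set σ : M2 := 1 - ρ 2 with hσdef
      have hσherm : σ.conjTranspose = σ := by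
        rw [hσdef, Matrix.conjTranspose_sub, hρ2.1, Matrix.conjTranspose_one]
      have hσi : σ * σ = σ := by
        rw [hσdef, Matrix.mul_sub, Matrix.sub_mul, Matrix.sub_mul, hρ2i]
        simp only [Matrix.one_mul, Matrix.mul_one]
        abel
      have hσpsd : σ.PosSemidef := by
        have := Matrix.posSemidef_conjTranspose_mul_self σ
        rwa [hσherm, hσi] at this
      have hσtr : σ.trace = 1 := by
        rw [hσdef, Matrix.trace_sub, Matrix.trace_one, hρ2t]
        norm_num
      have hsand : σ * M11 * σ = M11 := by
        rw [hσdef, Matrix.sub_mul, Matrix.one_mul, hρ2M11, sub_zero,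
          Matrix.mul_sub, Matrix.mul_one, hM11ρ2, sub_zero]
      set b : ℝ := ((σ * M11).trace).re with hb
      have hbc : (σ * M11).trace = (b : ℂ) := (pair_real hσpsd hM11.1).1
      have hM11eq : M11 = (b : ℂ) • σ := by
        rw [← hsand, pure_sandwich hσpsd hM11.1 hσi hσtr, hbc]
      have hbp3 : b ≤ p3 := by
        have : b = p3 * ((σ * N3).trace).re := by rw [hb, hM11e, smul_trace_re]
        rw [this]
        exact mul_le_of_le_one_right hp3 (pair_le_one hσpsd hσtr hN3.2)
      have hQ00 : Q 0 0 = b * (1 - t) := by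
        rw [e00, hM11eq, Matrix.mul_smul, Matrix.trace_smul]
        have hρ0σ : (ρ 0 * σ).trace = ((1 - t : ℝ) : ℂ) := by
          rw [hσdef, Matrix.mul_sub, Matrix.mul_one, Matrix.trace_sub, hρ0t,
            Matrix.trace_mul_comm, (pair_real hρ2 hρ0).1, ← hT]
          push_cast
          ring
        rw [hρ0σ, smul_eq_mul, ← Complex.ofReal_mul, Complex.ofReal_re]
      rw [hQ00]
      nlinarith
  · -- p1 > 0
    have hx1 : (ρ 2 * N1).trace = 0 := by
      have hexp : ((ρ 2 * M11).trace).re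
          = p1 * ((ρ 2 * N1).trace).re + p3 * ((ρ 2 * N3).trace).re := by
        rw [hd11, Matrix.mul_add, Matrix.trace_add, Complex.add_re, smul_trace_re, smul_trace_re]
      rw [h20c] at hexp
      simp only [Complex.zero_re] at hexp
      have r1 := (pair_real hρ2 hN1.1).2
      have r3 := (pair_real hρ2 hN3.1).2
      have m1 := mul_nonneg hp3 r3
      have m2 := mul_nonneg hp1 r1
      have hz : p1 * ((ρ 2 * N1).trace).re = 0 := by linarith
      have hx1re : ((ρ 2 * N1).trace).re = 0 :=
        (mul_eq_zero.mp hz).resolve_left (ne_of_gt hp1pos)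
      rw [(pair_real hρ2 hN1.1).1, hx1re]
      simp
    have hy1 : (ρ 1 * (1 - N1)).trace = 0 := by
      have hexp : ((ρ 1 * M21).trace).re
          = p1 * ((ρ 1 * (1 - N1)).trace).re + p2 * ((ρ 1 * N2).trace).re := by
        rw [hd21, Matrix.mul_add, Matrix.trace_add, Complex.add_re, smul_trace_re, smul_trace_re]
      rw [h11] at hexp
      simp only [Complex.zero_re] at hexp
      have r1 := (pair_real hρ1 hN1.2).2
      have r2 := (pair_real hρ1 hN2.1).2
      have m1 := mul_nonneg hp2 r2
      have m2 := mul_nonneg hp1 r1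
      have hz : p1 * ((ρ 1 * (1 - N1)).trace).re = 0 := by linarith
      have hy1re : ((ρ 1 * (1 - N1)).trace).re = 0 :=
        (mul_eq_zero.mp hz).resolve_left (ne_of_gt hp1pos)
      rw [(pair_real hρ1 hN1.2).1, hy1re]
      simp
    obtain ⟨hsum21, _, _⟩ := orth_sum hρ2 hρ1 hρ2t hρ1t hN1.1 hN1.2 hx1 hy1
    have hρ2eq : ρ 2 = ρ 0 := by
      have : ρ 2 = 1 - ρ 1 := by rw [← hsum21]; abel
      rw [this, ← hsum01]; abel
    have hQ00 : Q 0 0 = 0 := by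
      rw [e00, ← hρ2eq, ← e20, p20]
    have htone : t = 1 := by
      rw [hT, hρ2eq, hρ0i]
      have := congrArg Complex.re hρ0t
      simpa using this
    rw [hQ00, htone]
    linarith

noncomputable def wr : Fin 3 → M2 :=
  ![!![((1:ℝ):ℂ), ((0:ℝ):ℂ); ((0:ℝ):ℂ), ((0:ℝ):ℂ)],
    !![((0:ℝ):ℂ), ((0:ℝ):ℂ); ((0:ℝ):ℂ), ((1:ℝ):ℂ)],
    !![((1/2:ℝ):ℂ), ((1/2:ℝ):ℂ); ((1/2:ℝ):ℂ), ((1/2:ℝ):ℂ)]]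
noncomputable def wm11 : M2 := !![((29/100:ℝ):ℂ), ((-29/100:ℝ):ℂ); ((-29/100:ℝ):ℂ), ((29/100:ℝ):ℂ)]
noncomputable def wm21 : M2 := !![((29/50:ℝ):ℂ), ((0:ℝ):ℂ); ((0:ℝ):ℂ), ((0:ℝ):ℂ)]
noncomputable def wm31 : M2 := !![((13/100:ℝ):ℂ), ((29/100:ℝ):ℂ); ((29/100:ℝ):ℂ), ((71/100:ℝ):ℂ)]
noncomputable def wm12 : M2 := !![((0:ℝ):ℂ), ((0:ℝ):ℂ); ((0:ℝ):ℂ), ((1:ℝ):ℂ)]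
noncomputable def wm22 : M2 := !![((1:ℝ):ℂ), ((0:ℝ):ℂ); ((0:ℝ):ℂ), ((0:ℝ):ℂ)]

lemma psd_diag_s3 (x z : ℝ) (hx : 0 ≤ x) (hz : 0 ≤ z) :
    (!![(x : ℂ), ((0:ℝ):ℂ); ((0:ℝ):ℂ), (z : ℂ)]).PosSemidef := by
  have : (!![(x : ℂ), ((0:ℝ):ℂ); ((0:ℝ):ℂ), (z : ℂ)]) = Matrix.diagonal ![(x:ℂ), (z:ℂ)] := by
    ext i j
    fin_cases i <;> fin_cases j <;> simp [Matrix.diagonal]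
  rw [this]
  apply Matrix.PosSemidef.diagonal
  intro i
  fin_cases i <;> simp <;> exact_mod_cast ‹_›


lemma one_sub_mat (a b c d : ℝ) :
    (1 : M2) - !![(a:ℂ), (b:ℂ); (c:ℂ), (d:ℂ)]
      = !![((1 - a : ℝ):ℂ), ((-b : ℝ):ℂ); ((-c : ℝ):ℂ), ((1 - d : ℝ):ℂ)] := by
  ext i j
  fin_cases i <;> fin_cases j <;> simp [Matrix.one_apply] <;> push_cast <;> ring

lemma wstate (x : Fin 3) : QubitState (wr x) := by
  fin_cases x
  · constructor
    · exact psd_diag_s3 1 0 (by norm_num) (by norm_num)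
    · show Matrix.trace !![((1:ℝ):ℂ), ((0:ℝ):ℂ); ((0:ℝ):ℂ), ((0:ℝ):ℂ)] = 1
      rw [Matrix.trace_fin_two]
      push_cast
      norm_num
  · constructor
    · exact psd_diag_s3 0 1 (by norm_num) (by norm_num)
    · show Matrix.trace !![((0:ℝ):ℂ), ((0:ℝ):ℂ); ((0:ℝ):ℂ), ((1:ℝ):ℂ)] = 1
      rw [Matrix.trace_fin_two]
      push_cast
      norm_num
  · constructor
    · exact psd2 (1/2) (1/2) (1/2) (by norm_num) (by norm_num) (by norm_num)
    · show Matrix.trace !![((1/2:ℝ):ℂ), ((1/2:ℝ):ℂ); ((1/2:ℝ):ℂ), ((1/2:ℝ):ℂ)] = 1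
      rw [Matrix.trace_fin_two]
      push_cast
      norm_num

lemma weff11 : QubitEffect wm11 := by
  constructor
  · exact psd2 (29/100) (-29/100) (29/100) (by norm_num) (by norm_num) (by norm_num)
  · rw [show wm11 = !![((29/100:ℝ):ℂ), ((-29/100:ℝ):ℂ); ((-29/100:ℝ):ℂ), ((29/100:ℝ):ℂ)] from rfl,
      one_sub_mat]
    have := psd2 (71/100) (29/100) (71/100) (by norm_num) (by norm_num) (by norm_num)
    convert this using 2 <;> norm_num

lemma weff21 : QubitEffect wm21 := by
  constructor
  · exact psd_diag_s3 (29/50) 0 (by norm_num) (by norm_num)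
  · rw [show wm21 = !![((29/50:ℝ):ℂ), ((0:ℝ):ℂ); ((0:ℝ):ℂ), ((0:ℝ):ℂ)] from rfl, one_sub_mat]
    have := psd_diag_s3 (21/50) 1 (by norm_num) (by norm_num)
    convert this using 2 <;> norm_num

lemma weff31 : QubitEffect wm31 := by
  constructor
  · exact psd2 (13/100) (29/100) (71/100) (by norm_num) (by norm_num) (by norm_num)
  · rw [show wm31 = !![((13/100:ℝ):ℂ), ((29/100:ℝ):ℂ); ((29/100:ℝ):ℂ), ((71/100:ℝ):ℂ)] from rfl,
      one_sub_mat]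
    have := psd2 (87/100) (-29/100) (29/100) (by norm_num) (by norm_num) (by norm_num)
    convert this using 2 <;> norm_num

lemma weff12 : QubitEffect wm12 := by
  constructor
  · exact psd_diag_s3 0 1 (by norm_num) (by norm_num)
  · rw [show wm12 = !![((0:ℝ):ℂ), ((0:ℝ):ℂ); ((0:ℝ):ℂ), ((1:ℝ):ℂ)] from rfl, one_sub_mat]
    have := psd_diag_s3 1 0 (by norm_num) (by norm_num)
    convert this using 2 <;> norm_num

lemma weff22 : QubitEffect wm22 := by
  constructor
  · exact psd_diag_s3 1 0 (by norm_num) (by norm_num)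
  · rw [show wm22 = !![((1:ℝ):ℂ), ((0:ℝ):ℂ); ((0:ℝ):ℂ), ((0:ℝ):ℂ)] from rfl, one_sub_mat]
    have := psd_diag_s3 0 1 (by norm_num) (by norm_num)
    convert this using 2 <;> norm_num

lemma wreal : IsRealization (Pmat (29/50) (29/50) (1/2)) wr wm11 wm21 wm31 wm12 wm22 := by
  refine ⟨wstate, weff11, weff21, weff31, ?_, weff12, weff22, ?_, ?_⟩
  · ext i j
    fin_cases i <;> fin_cases j <;>
      simp [wm11, wm21, wm31, Matrix.one_apply] <;> push_cast <;> norm_num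
  · ext i j
    fin_cases i <;> fin_cases j <;>
      simp [wm12, wm22, Matrix.one_apply] <;> push_cast <;> norm_num
  · intro x
    fin_cases x <;>
      refine ⟨?_, ?_, ?_⟩ <;>
      simp [Pmat, wr, wm11, wm21, wm12, Matrix.trace_fin_two, Matrix.mul_apply,
        Fin.sum_univ_two, ← Complex.ofReal_mul, ← Complex.ofReal_add, Complex.ofReal_re] <;>
      norm_num

lemma wUSD2 : USD2 (Pmat (29/50) (29/50) (1/2)) := by
  constructor
  · refine ⟨?_, ?_, ?_, ?_⟩ <;> simp [Pmat]
  · exact ⟨wr, wm11, wm21, wm31, wm12, wm22, wreal⟩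

/-- Theorem 1: there exist correlations in USD₂ that are not contained in the convex hull
of USD₂ ∩ SIM₂. -/
theorem exists_usd2_not_mem_convexHull_usd2_inter_sim2 :
    ∃ P : Matrix (Fin 3) (Fin 3) ℝ, USD2 P ∧
      P ∉ convexHull ℝ {Q : Matrix (Fin 3) (Fin 3) ℝ | USD2 Q ∧ SIM2 Q} := by
  refine ⟨Pmat (29/50) (29/50) (1/2), wUSD2, ?_⟩
  intro hmem
  set f : Matrix (Fin 3) (Fin 3) ℝ → ℝ := fun Q => Q 0 0 + Q 0 1 - Q 2 1 - Q 2 2 with hf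
  have hlin : IsLinearMap ℝ f := by
    constructor
    · intro x y; simp [hf, Matrix.add_apply]; ring
    · intro c x; simp [hf, Matrix.smul_apply, smul_eq_mul]; ring
  have hsub : {Q : Matrix (Fin 3) (Fin 3) ℝ | USD2 Q ∧ SIM2 Q} ⊆ {Q | f Q ≤ 0} := by
    rintro Q ⟨hU, hS⟩
    obtain ⟨ρ, A11, A21, A31, A12, A22, hrr, hsim⟩ := hS
    have := sim_bound hU.1 hrr hsim
    simp only [hf, Set.mem_setOf_eq]
    linarith
  have hconv : Convex ℝ {Q : Matrix (Fin 3) (Fin 3) ℝ | f Q ≤ 0} :=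
    convex_halfSpace_le hlin 0
  have := convexHull_min hsub hconv hmem
  simp only [Set.mem_setOf_eq, hf] at this
  norm_num [Pmat, Matrix.cons_val_two] at this
end Helpers
end

section
/- If D ∈ USD₂ ∩ SIM₂ and D₃,₃ ≠ 0, then there exist f₂, f₃, κ ∈ [0,1] and ξ ∈ (0,1] such that D equals the 3×3 matrix with rows (f₃(1−κ)ξ, f₂κ, 0), (f₃(1−κ)(1−ξ), 0, 1), (0, f₂κ(1−ξ), ξ). -/
open Matrix
open scoped ComplexOrder

/-!
In dimension two, the polarized Cayley–Hamilton identity shows that `ρ E = E ρ = 0` with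
`tr ρ = 1` forces `E = tr E • (1 - ρ)`. The USD pattern therefore makes `ρ₁ = 1 - ρ₂` and
`M₁|₂ = ρ₂`, so `ξ := D₃,₃ = tr (ρ₃ ρ₂)`. If the simulation gave weight `p₁ > 0` to the pair of
outcomes {1, 2}, then `N₁|₁` would fix `ρ₂` and annihilate `ρ₃`, forcing `ξ = 0`. Hence `p₁ = 0`,
and `M₁|₁ = p₃ N₁|₃`, `M₂|₁ = p₂ N₂|₂`, which vanish on `ρ₃` and `ρ₂` respectively, equal
`f₃ p₃ (1 - ρ₃)` and `f₂ p₂ ρ₁` with `f₂, f₃ ∈ [0, 1]`; reading off the entries gives the claim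
with `κ = p₂`. In the code the states `ρ₁, ρ₂, ρ₃` are `σ 0, σ 1, σ 2`.
-/

namespace Matrix

variable {𝕜 n : Type*} [RCLike 𝕜] [Fintype n] {A B : Matrix n n 𝕜}

lemma trace_conjTranspose_mul_self_mul_conjTranspose_mul_self_s4 (X Y : Matrix n n 𝕜) :
    (Xᴴ * X * (Yᴴ * Y)).trace = ((Y * Xᴴ)ᴴ * (Y * Xᴴ)).trace := by
  rw [conjTranspose_mul, conjTranspose_conjTranspose, Matrix.mul_assoc, trace_mul_comm]
  simp only [Matrix.mul_assoc]

open scoped MatrixOrder in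
lemma PosSemidef.trace_mul_nonneg_s4 (hA : A.PosSemidef) (hB : B.PosSemidef) :
    0 ≤ (A * B).trace := by
  classical
  obtain ⟨X, rfl⟩ := CStarAlgebra.nonneg_iff_eq_star_mul_self.mp hA.nonneg
  obtain ⟨Y, rfl⟩ := CStarAlgebra.nonneg_iff_eq_star_mul_self.mp hB.nonneg
  rw [star_eq_conjTranspose, star_eq_conjTranspose,
    trace_conjTranspose_mul_self_mul_conjTranspose_mul_self_s4]
  exact (posSemidef_conjTranspose_mul_self _).trace_nonneg

open scoped MatrixOrder in
lemma PosSemidef.mul_eq_zero_of_trace_mul_eq_zero_s4 (hA : A.PosSemidef) (hB : B.PosSemidef)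
    (h : (A * B).trace = 0) : A * B = 0 := by
  classical
  obtain ⟨X, rfl⟩ := CStarAlgebra.nonneg_iff_eq_star_mul_self.mp hA.nonneg
  obtain ⟨Y, rfl⟩ := CStarAlgebra.nonneg_iff_eq_star_mul_self.mp hB.nonneg
  rw [star_eq_conjTranspose, star_eq_conjTranspose,
    trace_conjTranspose_mul_self_mul_conjTranspose_mul_self_s4,
    trace_conjTranspose_mul_self_eq_zero_iff] at h
  have h' : X * Yᴴ = 0 := by simpa using congrArg (·ᴴ) h
  rw [star_eq_conjTranspose, star_eq_conjTranspose, Matrix.mul_assoc, ← Matrix.mul_assoc X, h']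
  simp

lemma PosSemidef.mul_eq_zero_of_re_trace_mul_eq_zero (hA : A.PosSemidef) (hB : B.PosSemidef)
    (h : RCLike.re (A * B).trace = 0) : A * B = 0 := by
  refine hA.mul_eq_zero_of_trace_mul_eq_zero_s4 hB ?_
  have := RCLike.nonneg_iff.mp (hA.trace_mul_nonneg_s4 hB)
  exact RCLike.ext (by simpa using h) (by simpa using this.2)

lemma IsHermitian.mul_eq_zero_comm_s4 (hA : A.IsHermitian) (hB : B.IsHermitian) :
    A * B = 0 ↔ B * A = 0 := by
  constructor <;> intro h <;> simpa [hA.eq, hB.eq] using congrArg (·ᴴ) h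

lemma PosSemidef.mul_eq_zero_of_re_trace_mul_add_eq_zero {C : Matrix n n 𝕜} (hA : A.PosSemidef)
    (hB : B.PosSemidef) (hC : C.PosSemidef) {a b : ℝ} (ha : 0 < a) (hb : 0 ≤ b)
    (h : RCLike.re (A * (a • B + b • C)).trace = 0) : A * B = 0 := by
  have hAB := (RCLike.nonneg_iff.mp (hA.trace_mul_nonneg_s4 hB)).1
  have hAC := (RCLike.nonneg_iff.mp (hA.trace_mul_nonneg_s4 hC)).1
  simp only [Matrix.mul_add, Matrix.mul_smul, trace_add, trace_smul, map_add,
    RCLike.smul_re] at h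
  refine hA.mul_eq_zero_of_re_trace_mul_eq_zero hB ?_
  nlinarith [mul_nonneg ha.le hAB, mul_nonneg hb hAC]

lemma IsHermitian.mul_eq_zero_of_mul_one_sub_eq_zero [DecidableEq n] {E : Matrix n n 𝕜}
    (hA : A.IsHermitian) (hE : E.IsHermitian) (hAE : A * (1 - E) = 0) (hBE : B * E = 0) :
    B * A = 0 := by
  have hEA := ((hA.mul_eq_zero_comm_s4 (isHermitian_one.sub hE)).mp hAE)
  rw [Matrix.sub_mul, Matrix.one_mul, sub_eq_zero] at hEA
  rw [hEA, ← Matrix.mul_assoc, hBE, Matrix.zero_mul]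

variable {R : Type*} [CommRing R]

/-- Polarized Cayley–Hamilton identity in dimension two. -/
lemma mul_add_mul_fin_two (X Y : Matrix (Fin 2) (Fin 2) R) :
    X * Y + Y * X = X.trace • Y + Y.trace • X + ((X * Y).trace - X.trace * Y.trace) • 1 := by
  ext i j
  fin_cases i <;> fin_cases j <;>
    simp [mul_apply, trace_fin_two, Fin.sum_univ_two] <;> ring

lemma eq_trace_smul_one_sub_of_mul_eq_zero {X Y : Matrix (Fin 2) (Fin 2) R} (hXY : X * Y = 0)
    (hYX : Y * X = 0) (hX : X.trace = 1) : Y = Y.trace • (1 - X) := by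
  have h := mul_add_mul_fin_two X Y
  rw [hXY, hYX, hX, trace_zero] at h
  linear_combination (norm := module) -h

end Matrix

lemma QubitState.re_trace_mul_mem_Icc_s4 {ρ E : Matrix (Fin 2) (Fin 2) ℂ} (hρ : QubitState ρ)
    (hE : QubitEffect E) : (ρ * E).trace.re ∈ Set.Icc (0 : ℝ) 1 := by
  have h₀ := (Complex.nonneg_iff.mp (hρ.1.trace_mul_nonneg_s4 hE.1)).1
  have h₁ := (Complex.nonneg_iff.mp (hρ.1.trace_mul_nonneg_s4 hE.2)).1
  simp only [Matrix.mul_sub, Matrix.mul_one, trace_sub, hρ.2, Complex.sub_re,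
    Complex.one_re] at h₁
  exact ⟨h₀, by linarith⟩

lemma QubitEffect.exists_eq_smul_one_sub_of_mul_eq_zero {ρ E : Matrix (Fin 2) (Fin 2) ℂ}
    (hρ : QubitState ρ) (hE : QubitEffect E) (h : ρ * E = 0) :
    ∃ c ∈ Set.Icc (0 : ℝ) 1, E = c • (1 - ρ) := by
  have h' : E * ρ = 0 := (hρ.1.isHermitian.mul_eq_zero_comm_s4 hE.1.isHermitian).mp h
  have hEρ := eq_trace_smul_one_sub_of_mul_eq_zero h h' hρ.2
  obtain ⟨hc, hcim⟩ := Complex.nonneg_iff.mp hE.1.trace_nonneg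
  set c := E.trace.re
  have htr : E.trace = c := Complex.ext rfl (by simpa using hcim.symm)
  -- `E² = (tr E) E`, so `0 ≤ tr (E (1 - E)) = c - c²` bounds `c` by one.
  have hsq : E * E = E.trace • E := by
    nth_rewrite 2 [hEρ]
    rw [Matrix.mul_smul, Matrix.mul_sub, h', Matrix.mul_one, sub_zero]
  have hle := (Complex.nonneg_iff.mp (hE.1.trace_mul_nonneg_s4 hE.2)).1
  simp only [Matrix.mul_sub, Matrix.mul_one, hsq, trace_sub, trace_smul, htr, smul_eq_mul,
    Complex.sub_re, Complex.mul_re, Complex.ofReal_re, Complex.ofReal_im] at hle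
  refine ⟨c, ⟨hc, by nlinarith⟩, ?_⟩
  rw [← Complex.coe_smul, ← htr]
  exact hEρ

lemma QubitEffect.exists_smul_eq_smul_one_sub_of_mul_smul_eq_zero
    {ρ E : Matrix (Fin 2) (Fin 2) ℂ} (hρ : QubitState ρ) (hE : QubitEffect E) {a : ℝ}
    (h : ρ * (a • E) = 0) : ∃ c ∈ Set.Icc (0 : ℝ) 1, a • E = (c * a) • (1 - ρ) := by
  rcases eq_or_ne a 0 with rfl | ha
  · exact ⟨0, by simp, by simp⟩
  · rw [Matrix.mul_smul, smul_eq_zero] at h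
    obtain ⟨c, hc, rfl⟩ := hE.exists_eq_smul_one_sub_of_mul_eq_zero hρ (h.resolve_left ha)
    exact ⟨c, hc, by rw [smul_smul, mul_comm]⟩

lemma QubitEffect.eq_of_re_trace_mul_eq_zero_of_eq_one {ρ₀ ρ₁ P : Matrix (Fin 2) (Fin 2) ℂ}
    (hρ₀ : QubitState ρ₀) (hρ₁ : QubitState ρ₁) (hP : QubitEffect P)
    (h₀ : (ρ₀ * P).trace.re = 0) (h₁ : (ρ₁ * P).trace.re = 1) : P = ρ₁ ∧ ρ₀ = 1 - ρ₁ := by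
  have hρ₀P : ρ₀ * P = 0 := hρ₀.1.mul_eq_zero_of_re_trace_mul_eq_zero hP.1 h₀
  have hPρ₀ : P * ρ₀ = 0 := (hρ₀.1.isHermitian.mul_eq_zero_comm_s4 hP.1.isHermitian).mp hρ₀P
  have hρ₁P : ρ₁ * (1 - P) = 0 := hρ₁.1.mul_eq_zero_of_re_trace_mul_eq_zero hP.2 (by
    simp [Matrix.mul_sub, trace_sub, hρ₁.2, h₁])
  have hPρ₁ : (1 - P) * ρ₁ = 0 :=
    (hρ₁.1.isHermitian.mul_eq_zero_comm_s4 hP.2.isHermitian).mp hρ₁P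
  rw [Matrix.mul_sub, Matrix.mul_one, sub_eq_zero] at hρ₁P
  rw [Matrix.sub_mul, Matrix.one_mul, sub_eq_zero] at hPρ₁
  have h₀₁ : ρ₀ * ρ₁ = 0 := by rw [hPρ₁, ← Matrix.mul_assoc, hρ₀P, Matrix.zero_mul]
  have h₁₀ : ρ₁ * ρ₀ = 0 := by rw [hρ₁P, Matrix.mul_assoc, hPρ₀, Matrix.mul_zero]
  have hsum : ρ₁ = 1 - ρ₀ := by
    simpa [hρ₁.2] using eq_trace_smul_one_sub_of_mul_eq_zero h₀₁ h₁₀ hρ₀.2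
  have hPρ : P = P.trace • ρ₁ := hsum ▸ eq_trace_smul_one_sub_of_mul_eq_zero hρ₀P hPρ₀ hρ₀.2
  have hidem : ρ₁ * ρ₁ = ρ₁ := by
    conv_lhs => arg 2; rw [hsum]
    rw [Matrix.mul_sub, h₁₀, Matrix.mul_one, sub_zero]
  have htr : P.trace = 1 := by
    have : ρ₁ = P.trace • ρ₁ := by
      conv_lhs => rw [hρ₁P, hPρ, Matrix.mul_smul, hidem]
    simpa [hρ₁.2] using (congrArg trace this).symm
  exact ⟨by rw [hPρ, htr, one_smul], by rw [hsum, sub_sub_cancel]⟩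

lemma IsRealization.eq_Pmat_s4 {D : Matrix (Fin 3) (Fin 3) ℝ} {σ : Fin 3 → Matrix (Fin 2) (Fin 2) ℂ}
    {M11 M21 M31 M22 : Matrix (Fin 2) (Fin 2) ℂ} {a b : ℝ}
    (hR : IsRealization D σ M11 M21 M31 (σ 1) M22) (hpat : USDpattern D) (hσ : σ 0 = 1 - σ 1)
    (hM11 : M11 = a • (1 - σ 2)) (hM21 : M21 = b • (1 - σ 1)) :
    D = Pmat a b (D 2 2) := by
  obtain ⟨hstate, -, -, -, -, -, -, -, hD⟩ := hR
  obtain ⟨h02, h11, h12, h20⟩ := hpat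
  have h₁₁ : (σ 1 * σ 1).trace.re = 1 := by rw [← (hD 1).2.2, h12]
  have h₁₂ : (σ 1 * σ 2).trace.re = D 2 2 := by rw [(hD 2).2.2, trace_mul_comm]
  have h₂₁ : (σ 2 * σ 1).trace.re = D 2 2 := (hD 2).2.2.symm
  ext i j
  fin_cases i <;> fin_cases j <;>
    simp [Pmat, h02, h11, h12, h20, (hD _).1, (hD _).2.1, hσ, hM11, hM21, Matrix.mul_sub,
      Matrix.sub_mul, trace_sub, (hstate _).2, trace_smul, h₁₁, h₁₂, h₂₁] <;>
    norm_num

/-- Any `D ∈ USD₂ ∩ SIM₂` with `D 2 2 ≠ 0` has the form of Eq. (13). -/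
theorem usd2_inter_sim2_form (D : Matrix (Fin 3) (Fin 3) ℝ)
    (hU : USD2 D) (hS : SIM2 D) (h33 : D 2 2 ≠ 0) :
    ∃ f2 f3 κ ξ : ℝ, f2 ∈ Set.Icc (0 : ℝ) 1 ∧ f3 ∈ Set.Icc (0 : ℝ) 1 ∧
      κ ∈ Set.Icc (0 : ℝ) 1 ∧ ξ ∈ Set.Ioc (0 : ℝ) 1 ∧
      D = !![f3 * (1 - κ) * ξ,       f2 * κ,           0;
             f3 * (1 - κ) * (1 - ξ), 0,                1;
             0,                      f2 * κ * (1 - ξ), ξ] := by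
  obtain ⟨hpat, -⟩ := hU
  obtain ⟨σ, M11, M21, M31, M12, M22, hR, p1, p2, p3, N11, N22, N13, hp1, hp2, hp3, hp,
    hN11, hN22, hN13, hM11, hM21, -⟩ := hS
  obtain ⟨hσ, hE11, hE21, -, -, hE12, -, -, hD⟩ := id hR
  obtain ⟨rfl, hσ0⟩ := hE12.eq_of_re_trace_mul_eq_zero_of_eq_one (hσ 0) (hσ 1)
    ((hD 0).2.2 ▸ hpat.1) ((hD 1).2.2 ▸ hpat.2.2.1)
  have hσ1M21 : (σ 1 * M21).trace.re = 0 := (hD 1).2.1 ▸ hpat.2.1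
  have hσ2M11 : (σ 2 * M11).trace.re = 0 := (hD 2).1 ▸ hpat.2.2.2
  have hp1 : p1 = 0 := by
    by_contra hne
    have hp1 : 0 < p1 := hp1.lt_of_ne' hne
    have h₂₁ : σ 2 * σ 1 = 0 :=
      (hσ 1).1.isHermitian.mul_eq_zero_of_mul_one_sub_eq_zero hN11.1.isHermitian
        ((hσ 1).1.mul_eq_zero_of_re_trace_mul_add_eq_zero hN11.2 hN22.1 hp1 hp2 (hM21 ▸ hσ1M21))
        ((hσ 2).1.mul_eq_zero_of_re_trace_mul_add_eq_zero hN11.1 hN13.1 hp1 hp3 (hM11 ▸ hσ2M11))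
    exact h33 (by rw [(hD 2).2.2, h₂₁, trace_zero, Complex.zero_re])
  subst hp1
  obtain rfl : p3 = 1 - p2 := by linarith
  simp only [zero_smul, zero_add] at hM11 hM21
  subst hM11 hM21
  obtain ⟨t, ht, hM11⟩ := hN13.exists_smul_eq_smul_one_sub_of_mul_smul_eq_zero (hσ 2)
    ((hσ 2).1.mul_eq_zero_of_re_trace_mul_eq_zero hE11.1 hσ2M11)
  obtain ⟨c, hc, hM21⟩ := hN22.exists_smul_eq_smul_one_sub_of_mul_smul_eq_zero (hσ 1)
    ((hσ 1).1.mul_eq_zero_of_re_trace_mul_eq_zero hE21.1 hσ1M21)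
  have hξ := (hD 2).2.2 ▸ (hσ 2).re_trace_mul_mem_Icc_s4 hE12
  refine ⟨c, t, p2, D 2 2, hc, ht, ⟨hp2, by linarith⟩, ⟨hξ.1.lt_of_ne' h33, hξ.2⟩, ?_⟩
  exact hR.eq_Pmat_s4 hpat hσ0 hM11 hM21
end

section
/- For all f₂, f₃, κ ∈ [0,1] and ξ ∈ (0,1], the 3×3 matrix with rows (f₃(1−κ)ξ, f₂κ, 0), (f₃(1−κ)(1−ξ), 0, 1), (0, f₂κ(1−ξ), ξ) belongs to USD₂ ∩ SIM₂. -/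
open Matrix
open scoped ComplexOrder

/-!
Put `a = f₂κ` and `b = f₃(1 - κ)`, so that `a, b ≥ 0` and `a + b ≤ 1`. The matrix is realized
with real qubit vectors: the states `|0⟩, |1⟩, |φ⟩` with `φ = (√(1 - ξ), √ξ)`, the three-outcome
POVM `(b |ψ⟩⟨ψ|, a |0⟩⟨0|, rest)` with `ψ = (-√ξ, √(1 - ξ)) ⊥ φ`, and the computational-basis
measurement `(|1⟩⟨1|, |0⟩⟨0|)`; every entry is a weight times a squared overlap of real vectors.
The POVM is simulable: with probability `b` measure `(|ψ⟩⟨ψ|, 1 - |ψ⟩⟨ψ|)` on outcomes 1 and 3,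
and with probability `1 - b` measure `(a / (1 - b) |0⟩⟨0|, rest)` on outcomes 2 and 3.
-/

section RealProj

variable {n : Type*}

def realProj (v : n → ℝ) : Matrix n n ℂ :=
  vecMulVec (fun i => (v i : ℂ)) (star fun i => (v i : ℂ))

variable [Fintype n]

lemma posSemidef_realProj (v : n → ℝ) : (realProj v).PosSemidef :=
  posSemidef_vecMulVec_self_star _

lemma trace_realProj (v : n → ℝ) : (realProj v).trace = ((v ⬝ᵥ v : ℝ) : ℂ) := by
  simp [realProj, dotProduct]

lemma re_trace_realProj_mul_realProj (v w : n → ℝ) :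
    (realProj v * realProj w).trace.re = (v ⬝ᵥ w) ^ 2 := by
  simp [realProj, vecMulVec_mul_vecMulVec, dotProduct, pow_two, Finset.mul_sum, Finset.sum_mul]

lemma realProj_add_realProj_rot {v : Fin 2 → ℝ} (hv : v ⬝ᵥ v = 1) :
    realProj v + realProj ![-v 1, v 0] = 1 := by
  simp only [dotProduct, Fin.sum_univ_two] at hv
  have hvC : (v 0 : ℂ) * v 0 + v 1 * v 1 = 1 := by exact_mod_cast hv
  ext i j
  fin_cases i <;> fin_cases j <;> simp [realProj, vecMulVec_apply]
  · linear_combination hvC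
  · ring
  · ring
  · linear_combination hvC

end RealProj

lemma QubitEffect.of_add_eq_one {A B : Matrix (Fin 2) (Fin 2) ℂ} (hA : A.PosSemidef)
    (hB : B.PosSemidef) (h : A + B = 1) : QubitEffect A :=
  ⟨hA, by rwa [← h, add_sub_cancel_left]⟩

lemma QubitEffect.smul {E : Matrix (Fin 2) (Fin 2) ℂ} (hE : QubitEffect E) {r : ℝ} (hr₀ : 0 ≤ r)
    (hr₁ : r ≤ 1) : QubitEffect (r • E) := by
  refine ⟨hE.1.smul hr₀, ?_⟩
  have : 1 - r • E = (1 - r) • (1 : Matrix (Fin 2) (Fin 2) ℂ) + r • (1 - E) := by module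
  rw [this]
  exact (PosSemidef.one.smul (sub_nonneg.2 hr₁)).add (hE.2.smul hr₀)

lemma qubitEffect_realProj {v : Fin 2 → ℝ} (hv : v ⬝ᵥ v = 1) : QubitEffect (realProj v) :=
  .of_add_eq_one (posSemidef_realProj _) (posSemidef_realProj _) (realProj_add_realProj_rot hv)

lemma qubitState_realProj {v : Fin 2 → ℝ} (hv : v ⬝ᵥ v = 1) : QubitState (realProj v) :=
  ⟨posSemidef_realProj v, by rw [trace_realProj, hv, Complex.ofReal_one]⟩

lemma qubitEffect_one_sub_smul_sub_smul {E F : Matrix (Fin 2) (Fin 2) ℂ} (hE : QubitEffect E)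
    (hF : QubitEffect F) {a b : ℝ} (ha : 0 ≤ a) (hb : 0 ≤ b) (hab : a + b ≤ 1) :
    QubitEffect (1 - b • E - a • F) := by
  refine .of_add_eq_one (B := b • E + a • F) ?_ ((hE.1.smul hb).add (hF.1.smul ha)) (by abel)
  have : 1 - b • E - a • F =
      (1 - a - b) • (1 : Matrix (Fin 2) (Fin 2) ℂ) + b • (1 - E) + a • (1 - F) := by module
  rw [this]
  exact ((PosSemidef.one.smul (by linarith)).add (hE.2.smul hb)).add (hF.2.smul ha)

lemma simulable_smul_smul {E F : Matrix (Fin 2) (Fin 2) ℂ} (hE : QubitEffect E)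
    (hF : QubitEffect F) {a b : ℝ} (ha : 0 ≤ a) (hb : 0 ≤ b) (hab : a + b ≤ 1) :
    Simulable (b • E) (a • F) (1 - b • E - a • F) := by
  -- if `b = 1` then `a = 0`, so the junk value `a / 0 = 0` does no harm
  have hc : (1 - b) * (a / (1 - b)) = a :=
    mul_div_cancel_of_imp' fun h => by linarith
  refine ⟨0, 1 - b, b, 0, (a / (1 - b)) • F, E, le_rfl, by linarith, hb, by ring,
    .of_add_eq_one PosSemidef.zero PosSemidef.one (zero_add 1),
    hF.smul (div_nonneg ha (by linarith)) (div_le_one_of_le₀ (by linarith) (by linarith)),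
    hE, by simp, by simp [smul_smul, hc], ?_⟩
  rw [smul_sub, smul_smul, hc]
  module

lemma usdPattern_Pmat (p q ξ : ℝ) : USDpattern (Pmat p q ξ) :=
  ⟨rfl, rfl, rfl, rfl⟩

theorem exists_simulable_realization_Pmat {a b ξ : ℝ} (ha : 0 ≤ a) (hb : 0 ≤ b) (hab : a + b ≤ 1)
    (hξ₀ : 0 ≤ ξ) (hξ₁ : ξ ≤ 1) :
    ∃ ρ M11 M21 M31 M12 M22, IsRealization (Pmat b a ξ) ρ M11 M21 M31 M12 M22 ∧
      Simulable M11 M21 M31 := by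
  set u := √ξ
  set w := √(1 - ξ)
  have hu : u ^ 2 = ξ := Real.sq_sqrt hξ₀
  have hw : w ^ 2 = 1 - ξ := Real.sq_sqrt (by linarith)
  set e₀ : Fin 2 → ℝ := ![1, 0]
  set e₁ : Fin 2 → ℝ := ![0, 1]
  set φ : Fin 2 → ℝ := ![w, u]
  set ψ : Fin 2 → ℝ := ![-u, w]
  have he₀ : e₀ ⬝ᵥ e₀ = 1 := by simp [e₀]
  have he₁ : e₁ ⬝ᵥ e₁ = 1 := by simp [e₁]
  have hφ : φ ⬝ᵥ φ = 1 := by simp [φ, dotProduct]; nlinarith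
  have hψ : ψ ⬝ᵥ ψ = 1 := by simp [ψ, dotProduct]; nlinarith
  have hE := qubitEffect_realProj hψ
  have hF := qubitEffect_realProj he₀
  refine ⟨fun x => realProj (![e₀, e₁, φ] x), b • realProj ψ, a • realProj e₀,
    1 - b • realProj ψ - a • realProj e₀, realProj e₁, realProj e₀,
    ⟨?_, hE.smul hb (by linarith), hF.smul ha (by linarith),
      qubitEffect_one_sub_smul_sub_smul hE hF ha hb hab, by abel, qubitEffect_realProj he₁, hF,
      ?_, ?_⟩, simulable_smul_smul hE hF ha hb hab⟩
  · intro x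
    fin_cases x
    exacts [qubitState_realProj he₀, qubitState_realProj he₁, qubitState_realProj hφ]
  · have := realProj_add_realProj_rot he₀
    simp only [e₀, cons_val_zero, cons_val_one, neg_zero] at this
    rwa [add_comm]
  · intro x
    fin_cases x <;>
      simp [Pmat, re_trace_realProj_mul_realProj, e₀, e₁, φ, ψ, dotProduct, hu, hw, mul_comm]

/-- Converse: for all `f2, f3, κ ∈ [0,1]` and `ξ ∈ (0,1]`, the matrix of Eq. (13)
belongs to USD₂ ∩ SIM₂. -/
theorem form_mem_usd2_inter_sim2 (f2 f3 κ ξ : ℝ)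
    (hf2 : f2 ∈ Set.Icc (0 : ℝ) 1) (hf3 : f3 ∈ Set.Icc (0 : ℝ) 1)
    (hκ : κ ∈ Set.Icc (0 : ℝ) 1) (hξ : ξ ∈ Set.Ioc (0 : ℝ) 1) :
    USD2 (!![f3 * (1 - κ) * ξ,       f2 * κ,           0;
             f3 * (1 - κ) * (1 - ξ), 0,                1;
             0,                      f2 * κ * (1 - ξ), ξ]) ∧
    SIM2 (!![f3 * (1 - κ) * ξ,       f2 * κ,           0;
             f3 * (1 - κ) * (1 - ξ), 0,                1;
             0,                      f2 * κ * (1 - ξ), ξ]) := by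
  have ha : 0 ≤ f2 * κ := mul_nonneg hf2.1 hκ.1
  have hb : 0 ≤ f3 * (1 - κ) := mul_nonneg hf3.1 (sub_nonneg.2 hκ.2)
  have hab : f2 * κ + f3 * (1 - κ) ≤ 1 := by
    nlinarith [mul_le_mul_of_nonneg_right hf2.2 hκ.1,
      mul_le_mul_of_nonneg_right hf3.2 (sub_nonneg.2 hκ.2)]
  obtain ⟨ρ, M11, M21, M31, M12, M22, hreal, hsim⟩ :=
    exists_simulable_realization_Pmat ha hb hab hξ.1.le hξ.2
  exact ⟨⟨usdPattern_Pmat _ _ _, ρ, M11, M21, M31, M12, M22, hreal⟩,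
    ρ, M11, M21, M31, M12, M22, hreal, hsim⟩
end

section
/- For every ξ with 0 < ξ < 1, setting p = 1/2 and q = 1/(1+ξ), the constraint (1−p)(1−q) ≥ p·q·ξ is satisfied (so 𝒫(p,q,ξ) ∈ USD₂ by Lemma 1) and moreover W(𝒫(p,q,ξ)) = −p·ξ − q + q(1−ξ) + ξ < 0. -/
open Matrix
open scoped ComplexOrder

/-!
All operators in the realization of `𝒫(p, q, ξ)` are real symmetric, and such a 2×2 matrix
`[[a, b], [b, c]]` is positive semidefinite iff `a, c ≥ 0` and `b² ≤ a c`. Take the basis states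
`|0⟩⟨0|`, `|1⟩⟨1|` and the pure state `ρ₃ = |ψ⟩⟨ψ|` with `ψ = (√(1-ξ), √ξ)`; let `M₁|₁` be `p`
times the projector onto `ψ^⊥` (so that `tr(ρ₃ M₁|₁) = 0`), `M₂|₁ = q |0⟩⟨0|`, and `M₃|₁` the
remainder. The determinant of `M₃|₁` is exactly `(1-p)(1-q) - p q ξ`, which is where the
constraint comes from. For `p = 1/2`, `q = 1/(1+ξ)` the constraint holds with equality and
`W = ξ (ξ - 1) / (2 (1 + ξ)) < 0`.
-/

def realSymm2 (a b c : ℝ) : Matrix (Fin 2) (Fin 2) ℂ :=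
  !![(a : ℂ), b; b, c]

theorem binary_quadratic_nonneg {a b c : ℝ} (ha : 0 ≤ a) (hc : 0 ≤ c) (hdet : b ^ 2 ≤ a * c)
    (t s : ℝ) : 0 ≤ a * t ^ 2 + 2 * b * t * s + c * s ^ 2 := by
  rcases ha.eq_or_lt with rfl | ha
  · obtain rfl : b = 0 := by nlinarith
    nlinarith
  · have hsq : a * (a * t ^ 2 + 2 * b * t * s + c * s ^ 2) =
        (a * t + b * s) ^ 2 + (a * c - b ^ 2) * s ^ 2 := by
      ring
    have : 0 ≤ a * (a * t ^ 2 + 2 * b * t * s + c * s ^ 2) := by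
      rw [hsq]
      exact add_nonneg (sq_nonneg _) (mul_nonneg (sub_nonneg.2 hdet) (sq_nonneg s))
    exact nonneg_of_mul_nonneg_right (by linarith) ha

theorem realSymm2_isHermitian (a b c : ℝ) : (realSymm2 a b c).IsHermitian := by
  ext i j
  fin_cases i <;> fin_cases j <;> simp [realSymm2]

theorem re_star_dotProduct_realSymm2_mulVec (a b c : ℝ) (x : Fin 2 → ℂ) :
    (star x ⬝ᵥ realSymm2 a b c *ᵥ x).re =
      (a * (x 0).re ^ 2 + 2 * b * (x 0).re * (x 1).re + c * (x 1).re ^ 2) +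
      (a * (x 0).im ^ 2 + 2 * b * (x 0).im * (x 1).im + c * (x 1).im ^ 2) := by
  simp [realSymm2, dotProduct, mulVec, Fin.sum_univ_two]
  ring

theorem posSemidef_realSymm2 {a b c : ℝ} (ha : 0 ≤ a) (hc : 0 ≤ c) (hdet : b ^ 2 ≤ a * c) :
    (realSymm2 a b c).PosSemidef := by
  refine .of_dotProduct_mulVec_nonneg (realSymm2_isHermitian a b c) fun x ↦ ?_
  rw [RCLike.nonneg_iff]
  refine ⟨?_, (realSymm2_isHermitian a b c).im_star_dotProduct_mulVec_self x⟩
  rw [RCLike.re_to_complex, re_star_dotProduct_realSymm2_mulVec]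
  exact add_nonneg (binary_quadratic_nonneg ha hc hdet _ _) (binary_quadratic_nonneg ha hc hdet _ _)

theorem one_sub_realSymm2 (a b c : ℝ) : 1 - realSymm2 a b c = realSymm2 (1 - a) (-b) (1 - c) := by
  ext i j
  fin_cases i <;> fin_cases j <;> simp [realSymm2]

theorem realSymm2_add (a b c d e f : ℝ) :
    realSymm2 a b c + realSymm2 d e f = realSymm2 (a + d) (b + e) (c + f) := by
  ext i j
  fin_cases i <;> fin_cases j <;> simp [realSymm2]

theorem realSymm2_one_zero_one : realSymm2 1 0 1 = 1 := by
  ext i j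
  fin_cases i <;> fin_cases j <;> simp [realSymm2]

theorem re_trace_realSymm2_mul (a b c d e f : ℝ) :
    (realSymm2 a b c * realSymm2 d e f).trace.re = a * d + 2 * b * e + c * f := by
  simp [realSymm2, trace_fin_two]
  ring

theorem qubitState_realSymm2 {a b c : ℝ} (ha : 0 ≤ a) (hc : 0 ≤ c) (hdet : b ^ 2 ≤ a * c)
    (htr : a + c = 1) : QubitState (realSymm2 a b c) := by
  refine ⟨posSemidef_realSymm2 ha hc hdet, ?_⟩
  simp [realSymm2, trace_fin_two]
  exact_mod_cast htr

theorem qubitEffect_realSymm2 {a b c : ℝ} (ha : 0 ≤ a) (hc : 0 ≤ c) (hdet : b ^ 2 ≤ a * c)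
    (ha' : a ≤ 1) (hc' : c ≤ 1) (hdet' : b ^ 2 ≤ (1 - a) * (1 - c)) :
    QubitEffect (realSymm2 a b c) := by
  refine ⟨posSemidef_realSymm2 ha hc hdet, ?_⟩
  rw [one_sub_realSymm2]
  exact posSemidef_realSymm2 (by linarith) (by linarith) (by rwa [neg_sq])

theorem qubitEffect_realSymm2_diag {a c : ℝ} (ha : 0 ≤ a) (hc : 0 ≤ c) (ha' : a ≤ 1)
    (hc' : c ≤ 1) :
    QubitEffect (realSymm2 a 0 c) :=
  qubitEffect_realSymm2 ha hc (by nlinarith) ha' hc' (by nlinarith)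

theorem USD2_Pmat {p q ξ : ℝ} (hp₀ : 0 ≤ p) (hp₁ : p ≤ 1) (hq₀ : 0 ≤ q) (hq₁ : q ≤ 1)
    (hξ₀ : 0 ≤ ξ) (hξ₁ : ξ ≤ 1) (h : p * q * ξ ≤ (1 - p) * (1 - q)) :
    USD2 (Pmat p q ξ) := by
  set s := √(ξ * (1 - ξ))
  have hs : s ^ 2 = ξ * (1 - ξ) := Real.sq_sqrt (by nlinarith)
  have hps : (p * s) ^ 2 = p ^ 2 * (ξ * (1 - ξ)) := by rw [mul_pow, hs]
  refine ⟨by simp [USDpattern, Pmat], ![realSymm2 1 0 0, realSymm2 0 0 1, realSymm2 (1 - ξ) s ξ],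
    realSymm2 (p * ξ) (-(p * s)) (p * (1 - ξ)), realSymm2 q 0 0,
    realSymm2 (1 - p * ξ - q) (p * s) (1 - p * (1 - ξ)), realSymm2 0 0 1, realSymm2 1 0 0,
    ?_, ?_, qubitEffect_realSymm2_diag hq₀ le_rfl hq₁ zero_le_one, ?_, ?_,
    qubitEffect_realSymm2_diag le_rfl zero_le_one zero_le_one le_rfl,
    qubitEffect_realSymm2_diag zero_le_one le_rfl le_rfl zero_le_one, ?_, ?_⟩
  · intro x
    fin_cases x
    · exact qubitState_realSymm2 zero_le_one le_rfl (by norm_num) (by norm_num)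
    · exact qubitState_realSymm2 le_rfl zero_le_one (by norm_num) (by norm_num)
    · exact qubitState_realSymm2 (by linarith) hξ₀ (by nlinarith) (by ring)
  · exact qubitEffect_realSymm2 (by positivity) (by nlinarith) (by rw [neg_sq, hps]; nlinarith)
      (by nlinarith) (by nlinarith) (by rw [neg_sq, hps]; nlinarith)
  · have hpξ : p * ξ ≤ 1 - q := by
      nlinarith [mul_nonneg hp₀ (mul_nonneg (sub_nonneg.2 hq₁) (sub_nonneg.2 hξ₁))]
    exact qubitEffect_realSymm2 (by linarith) (by nlinarith) (by rw [hps]; linarith)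
      (by nlinarith) (by nlinarith)
      (by rw [hps]; nlinarith [mul_nonneg (mul_nonneg hp₀ hq₀) (sub_nonneg.2 hξ₁)])
  · rw [realSymm2_add, realSymm2_add, ← realSymm2_one_zero_one]
    congr 1 <;> ring
  · rw [realSymm2_add, ← realSymm2_one_zero_one]
    norm_num
  · intro x
    fin_cases x
    · simp [Pmat, re_trace_realSymm2_mul]
    · simp [Pmat, re_trace_realSymm2_mul]
    · refine ⟨?_, ?_, ?_⟩ <;> simp [Pmat, re_trace_realSymm2_mul]
      · linear_combination 2 * p * hs
      · ring

/-- For `0 < ξ < 1`, `p = 1/2`, `q = 1/(1+ξ)`: the constraint `(1-p)(1-q) ≥ p q ξ` holds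
(so `𝒫(p,q,ξ) ∈ USD₂` by Lemma 1), and `W(𝒫(p,q,ξ)) = -pξ - q + q(1-ξ) + ξ < 0`. -/
theorem witness_negative_on_Pmat (ξ : ℝ) (h0 : 0 < ξ) (h1 : ξ < 1) :
    (1 - (1/2 : ℝ)) * (1 - 1/(1+ξ)) ≥ (1/2) * (1/(1+ξ)) * ξ ∧
    USD2 (Pmat (1/2) (1/(1+ξ)) ξ) ∧
    (-(Pmat (1/2) (1/(1+ξ)) ξ 0 0) - Pmat (1/2) (1/(1+ξ)) ξ 0 1
        + Pmat (1/2) (1/(1+ξ)) ξ 2 1 + Pmat (1/2) (1/(1+ξ)) ξ 2 2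
      = -(1/2) * ξ - 1/(1+ξ) + (1/(1+ξ)) * (1 - ξ) + ξ) ∧
    -(1/2) * ξ - 1/(1+ξ) + (1/(1+ξ)) * (1 - ξ) + ξ < 0 := by
  have hξ : 0 < 1 + ξ := by linarith
  have hconstraint : (1 - (1/2 : ℝ)) * (1 - 1/(1+ξ)) = (1/2) * (1/(1+ξ)) * ξ := by
    field_simp
    ring
  refine ⟨hconstraint.ge, USD2_Pmat (by norm_num) (by norm_num) (by positivity) ?_ h0.le h1.le
    hconstraint.ge, by simp [Pmat], ?_⟩
  · rw [div_le_one hξ]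
    linarith
  · have hW : -(1/2) * ξ - 1/(1+ξ) + (1/(1+ξ)) * (1 - ξ) + ξ = ξ * (ξ - 1) / (2 * (1 + ξ)) := by
      field_simp
      ring
    rw [hW]
    exact div_neg_of_neg_of_pos (mul_neg_of_pos_of_neg h0 (by linarith)) (by positivity)
end
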